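/- arXiv:1507.01600 — 9 statements merged into one kernel-verified Lean document; each statement's English description precedes it below -/
import Mathlib

section
/- Let N be an odd positive integer and c = (c₁,c₂,c₃) ∈ ℝ³ with r = √(c₁²+c₂²+c₃²). Then the matrix ϖ(c) satisfies the polynomial identity (ϖ(c) − 2^{−N}(1+r)·I)·(ϖ(c) − 2^{−N}(1−r)·I) = 0. Consequently ϖ(c) is Hermitian, every eigenvalue of ϖ(c) equals 2^{−N}(1+r) or 2^{−N}(1−r), and if r > 0 then each of these two values occurs as an eigenvalue with multiplicity exactly 2^{N−1}. -/
/-!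
For odd `N` the Kronecker powers `Σⱼ = σⱼ^{⊗N}` still square to `1` and pairwise anticommute,
because the sign `(-1)^N` coming from the anticommuting Pauli factors stays `-1`. Hence
`S = ∑ cⱼ Σⱼ` satisfies `S² = r²`, which is the quadratic identity for `ϖ = 2^{-N} (1 + S)`,
and the spectrum lies in `{2^{-N} (1 ± r)}`. The two multiplicities `a, b` satisfy `a + b = 2^N`
and, since the Pauli matrices are traceless, `tr ϖ = 1`, i.e. `a (1 + r) + b (1 - r) = 2^N`;
for `r ≠ 0` this forces `a = b`.
-/

open Matrix BigOperators Polynomial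

/-- The three Pauli matrices. -/
noncomputable def pauli : Fin 3 → Matrix (Fin 2) (Fin 2) ℂ :=
  ![!![0, 1; 1, 0], !![0, -Complex.I; Complex.I, 0], !![1, 0; 0, -1]]

/-- The `N`-fold Kronecker power of a 2×2 matrix, with rows and columns indexed by
`Fin N → Fin 2` (the `N`-qubit computational basis). -/
noncomputable def kronPow (A : Matrix (Fin 2) (Fin 2) ℂ) (N : ℕ) :
    Matrix (Fin N → Fin 2) (Fin N → Fin 2) ℂ :=
  Matrix.of fun i j => ∏ k, A (i k) (j k)

/-- The `M³_N` state `ϖ(c) = 2^{-N} (I + c₁ σ₁^{⊗N} + c₂ σ₂^{⊗N} + c₃ σ₃^{⊗N})`. -/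
noncomputable def Mstate (N : ℕ) (c : Fin 3 → ℝ) :
    Matrix (Fin N → Fin 2) (Fin N → Fin 2) ℂ :=
  ((2 : ℂ) ^ N)⁻¹ • (1 + ∑ j : Fin 3, (c j : ℂ) • kronPow (pauli j) N)

section KronPow

variable (N : ℕ)

lemma kronPow_mul (A B : Matrix (Fin 2) (Fin 2) ℂ) :
    kronPow A N * kronPow B N = kronPow (A * B) N := by
  ext i l
  simp only [kronPow, Matrix.mul_apply, Matrix.of_apply]
  rw [Finset.prod_univ_sum, Fintype.piFinset_univ]
  simp [Finset.prod_mul_distrib]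

lemma kronPow_one : kronPow 1 N = 1 := by
  ext i j
  simp only [kronPow, Matrix.of_apply, Matrix.one_apply]
  split_ifs with h
  · subst h; simp
  · obtain ⟨k, hk⟩ := Function.ne_iff.mp h
    exact Finset.prod_eq_zero (Finset.mem_univ k) (by simp [hk])

lemma kronPow_smul (z : ℂ) (A : Matrix (Fin 2) (Fin 2) ℂ) :
    kronPow (z • A) N = z ^ N • kronPow A N := by
  ext i j
  simp [kronPow, Finset.prod_mul_distrib]

lemma kronPow_conjTranspose (A : Matrix (Fin 2) (Fin 2) ℂ) :
    (kronPow A N)ᴴ = kronPow Aᴴ N := by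
  ext i j
  simp [kronPow, Matrix.conjTranspose_apply]

lemma trace_kronPow (A : Matrix (Fin 2) (Fin 2) ℂ) :
    (kronPow A N).trace = A.trace ^ N := by
  simp only [Matrix.trace, Matrix.diag, kronPow, Matrix.of_apply]
  rw [← Fin.prod_const, Finset.prod_univ_sum, Fintype.piFinset_univ]

variable {N}

lemma kronPow_mul_self_eq_one {A : Matrix (Fin 2) (Fin 2) ℂ} (h : A * A = 1) :
    kronPow A N * kronPow A N = 1 := by
  rw [kronPow_mul, h, kronPow_one]

lemma kronPow_anticomm (hN : Odd N) {A B : Matrix (Fin 2) (Fin 2) ℂ} (h : A * B = -(B * A)) :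
    kronPow A N * kronPow B N = -(kronPow B N * kronPow A N) := by
  rw [kronPow_mul, kronPow_mul, h, ← neg_one_smul ℂ (B * A), kronPow_smul, hN.neg_one_pow,
    neg_one_smul]

end KronPow

lemma pauli_mul_self (j : Fin 3) : pauli j * pauli j = 1 := by
  fin_cases j <;>
    · ext i k; fin_cases i <;> fin_cases k <;>
        simp [pauli, Matrix.mul_apply, Fin.sum_univ_two, Complex.I_mul_I]

lemma pauli_anticomm {i j : Fin 3} (h : i ≠ j) : pauli i * pauli j = -(pauli j * pauli i) := by
  fin_cases i <;> fin_cases j <;> simp at h ⊢ <;>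
    · ext k l; fin_cases k <;> fin_cases l <;> simp [pauli, Matrix.mul_apply, Fin.sum_univ_two]

lemma pauli_conjTranspose (j : Fin 3) : (pauli j)ᴴ = pauli j := by
  fin_cases j <;>
    · ext i k; fin_cases i <;> fin_cases k <;> simp [pauli, Matrix.conjTranspose_apply]

lemma trace_pauli (j : Fin 3) : (pauli j).trace = 0 := by
  fin_cases j <;> simp [pauli, Matrix.trace, Fin.sum_univ_two]

lemma sum_smul_mul_self_of_anticomm {K A : Type*} [CommRing K] [Ring A] [Algebra K A]
    (S : Fin 3 → A) (hsq : ∀ i, S i * S i = 1) (hanti : ∀ i j, i ≠ j → S i * S j = -(S j * S i))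
    (c : Fin 3 → K) :
    (∑ j, c j • S j) * (∑ j, c j • S j) = (c 0 ^ 2 + c 1 ^ 2 + c 2 ^ 2) • 1 := by
  simp only [Fin.sum_univ_three, add_mul, mul_add, smul_mul_smul_comm, hsq,
    hanti 1 0 (by decide), hanti 2 0 (by decide), hanti 2 1 (by decide)]
  module

lemma quadratic_of_mul_self_eq {K A : Type*} [CommRing K] [Ring A] [Algebra K A]
    {S : A} {r : K} (h : S * S = r ^ 2 • 1) (t : K) :
    (t • (1 + S) - (t * (1 + r)) • 1) * (t • (1 + S) - (t * (1 - r)) • 1) = 0 := by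
  have e : (t • (1 + S) - (t * (1 + r)) • 1) * (t • (1 + S) - (t * (1 - r)) • 1) =
      (t ^ 2) • (S * S - r ^ 2 • 1) := by
    simp only [sub_mul, mul_sub, add_mul, mul_add, smul_mul_smul_comm, one_mul, mul_one, smul_sub]
    module
  rw [e, h, sub_self, smul_zero]

lemma spectrum_subset_pair_of_mul_eq_zero {𝕜 A : Type*} [Field 𝕜] [Ring A] [Nontrivial A]
    [Algebra 𝕜 A] {a : A} {x y : 𝕜} (h : (a - x • 1) * (a - y • 1) = 0) :
    spectrum 𝕜 a ⊆ {x, y} := by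
  intro μ hμ
  have hp : aeval a ((X - C x) * (X - C y)) = 0 := by
    simpa [Algebra.algebraMap_eq_smul_one] using h
  have := spectrum.subset_polynomial_aeval a ((X - C x) * (X - C y)) ⟨μ, hμ, rfl⟩
  rw [hp, spectrum.zero_eq] at this
  simpa [sub_eq_zero] using this

lemma Matrix.charpoly_roots_eq_of_spectrum_subset_pair {n : Type*} [Fintype n] [DecidableEq n]
    {M : Matrix n n ℂ} {x y : ℂ} (hxy : x ≠ y) (h : spectrum ℂ M ⊆ {x, y}) :
    M.charpoly.roots = Multiset.replicate (M.charpoly.rootMultiplicity x) x +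
      Multiset.replicate (M.charpoly.rootMultiplicity y) y := by
  ext z
  rw [Multiset.count_add, Multiset.count_replicate, Multiset.count_replicate, count_roots]
  by_cases hx : z = x
  · rw [if_pos hx.symm, if_neg (hx ▸ hxy.symm), hx, add_zero]
  by_cases hy : z = y
  · rw [if_neg (Ne.symm hx), if_pos hy.symm, hy, zero_add]
  have hz : ¬ M.charpoly.IsRoot z := fun hz =>
    (h (Matrix.mem_spectrum_iff_isRoot_charpoly.mpr hz)).elim hx hy
  rw [if_neg (Ne.symm hx), if_neg (Ne.symm hy), rootMultiplicity_eq_zero hz]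

noncomputable def pauliSum (N : ℕ) (c : Fin 3 → ℝ) : Matrix (Fin N → Fin 2) (Fin N → Fin 2) ℂ :=
  ∑ j : Fin 3, (c j : ℂ) • kronPow (pauli j) N

section Mstate

variable {N : ℕ} (c : Fin 3 → ℝ)

lemma Mstate_eq_smul_one_add_pauliSum : Mstate N c = ((2 : ℂ) ^ N)⁻¹ • (1 + pauliSum N c) := rfl

lemma pauliSum_mul_self (hN : Odd N) :
    pauliSum N c * pauliSum N c = ((c 0 ^ 2 + c 1 ^ 2 + c 2 ^ 2 : ℝ) : ℂ) • 1 := by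
  rw [pauliSum, sum_smul_mul_self_of_anticomm _
    (fun i => kronPow_mul_self_eq_one (pauli_mul_self i))
    (fun i j h => kronPow_anticomm hN (pauli_anticomm h))]
  push_cast
  rfl

lemma pauliSum_conjTranspose : (pauliSum N c)ᴴ = pauliSum N c := by
  simp [pauliSum, Matrix.conjTranspose_sum, kronPow_conjTranspose, pauli_conjTranspose]

lemma trace_pauliSum (hN : N ≠ 0) : (pauliSum N c).trace = 0 := by
  simp [pauliSum, Matrix.trace_sum, trace_kronPow, trace_pauli, hN]

lemma Mstate_isHermitian : (Mstate N c).IsHermitian := by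
  simp [Matrix.IsHermitian, Mstate_eq_smul_one_add_pauliSum, pauliSum_conjTranspose]

lemma trace_Mstate (hN : N ≠ 0) : (Mstate N c).trace = 1 := by
  simp [Mstate_eq_smul_one_add_pauliSum, trace_pauliSum c hN]

lemma Mstate_quadratic (hN : Odd N) {r : ℝ} (hr : r ^ 2 = c 0 ^ 2 + c 1 ^ 2 + c 2 ^ 2) :
    (Mstate N c - ((((2:ℝ)^N)⁻¹ * (1 + r) : ℝ) : ℂ) • 1) *
      (Mstate N c - ((((2:ℝ)^N)⁻¹ * (1 - r) : ℝ) : ℂ) • 1) = 0 := by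
  have hS : pauliSum N c * pauliSum N c = (r : ℂ) ^ 2 • 1 := by
    rw [pauliSum_mul_self c hN, ← hr]; push_cast; rfl
  convert quadratic_of_mul_self_eq hS ((2 : ℂ) ^ N)⁻¹ using 3 <;> push_cast <;> rfl

lemma rootMultiplicity_charpoly_Mstate (hN : Odd N) {r : ℝ}
    (hr : r ^ 2 = c 0 ^ 2 + c 1 ^ 2 + c 2 ^ 2) (hr0 : 0 < r) :
    (Mstate N c).charpoly.rootMultiplicity ((((2:ℝ)^N)⁻¹ * (1 + r) : ℝ) : ℂ) = 2^(N-1) ∧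
      (Mstate N c).charpoly.rootMultiplicity ((((2:ℝ)^N)⁻¹ * (1 - r) : ℝ) : ℂ) = 2^(N-1) := by
  set p := (Mstate N c).charpoly
  have hne : ((((2:ℝ)^N)⁻¹ * (1 + r) : ℝ) : ℂ) ≠ ((((2:ℝ)^N)⁻¹ * (1 - r) : ℝ) : ℂ) := by
    rw [Ne, Complex.ofReal_inj, mul_right_inj' (by positivity)]
    linarith
  have hroots := Matrix.charpoly_roots_eq_of_spectrum_subset_pair hne
    (spectrum_subset_pair_of_mul_eq_zero (Mstate_quadratic c hN hr))
  set ka := p.rootMultiplicity ((((2:ℝ)^N)⁻¹ * (1 + r) : ℝ) : ℂ)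
  set kb := p.rootMultiplicity ((((2:ℝ)^N)⁻¹ * (1 - r) : ℝ) : ℂ)
  have hcard : (ka : ℝ) + kb = 2 ^ N := by
    have := congrArg Multiset.card hroots
    rw [IsAlgClosed.card_roots_eq_natDegree, Matrix.charpoly_natDegree_eq_dim,
      Fintype.card_fun, Fintype.card_fin, Fintype.card_fin, Multiset.card_add,
      Multiset.card_replicate, Multiset.card_replicate] at this
    exact_mod_cast this.symm
  have htrace : (ka : ℝ) * (((2:ℝ)^N)⁻¹ * (1 + r)) + kb * (((2:ℝ)^N)⁻¹ * (1 - r)) = 1 := by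
    have := congrArg Multiset.sum hroots
    rw [← Matrix.trace_eq_sum_roots_charpoly, trace_Mstate c hN.pos.ne', Multiset.sum_add,
      Multiset.sum_replicate, Multiset.sum_replicate, nsmul_eq_mul, nsmul_eq_mul] at this
    exact_mod_cast this.symm
  have hdiff : ((ka : ℝ) - kb) * r = 0 := by
    field_simp at htrace
    linear_combination htrace - hcard
  have hk : ka = kb := by
    exact_mod_cast sub_eq_zero.mp ((mul_eq_zero.mp hdiff).resolve_right hr0.ne')
  have hcard' : ka + kb = 2 * 2 ^ (N - 1) := by
    rw [← pow_succ', Nat.sub_add_cancel hN.pos]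
    exact_mod_cast hcard
  omega

end Mstate

theorem stmt0 (N : ℕ) (hN : Odd N) (c : Fin 3 → ℝ)
    (r : ℝ) (hr : r = Real.sqrt (c 0 ^ 2 + c 1 ^ 2 + c 2 ^ 2)) :
    (Mstate N c - ((((2:ℝ)^N)⁻¹ * (1 + r) : ℝ) : ℂ) • 1) *
      (Mstate N c - ((((2:ℝ)^N)⁻¹ * (1 - r) : ℝ) : ℂ) • 1) = 0 ∧
    (Mstate N c).IsHermitian ∧
    (∀ μ ∈ spectrum ℂ (Mstate N c),
      μ = ((((2:ℝ)^N)⁻¹ * (1 + r) : ℝ) : ℂ) ∨ μ = ((((2:ℝ)^N)⁻¹ * (1 - r) : ℝ) : ℂ)) ∧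
    (0 < r →
      (Mstate N c).charpoly.rootMultiplicity ((((2:ℝ)^N)⁻¹ * (1 + r) : ℝ) : ℂ) = 2^(N-1) ∧
      (Mstate N c).charpoly.rootMultiplicity ((((2:ℝ)^N)⁻¹ * (1 - r) : ℝ) : ℂ) = 2^(N-1)) := by
  have hr2 : r ^ 2 = c 0 ^ 2 + c 1 ^ 2 + c 2 ^ 2 := hr ▸ Real.sq_sqrt (by positivity)
  have hquad := Mstate_quadratic c hN hr2
  exact ⟨hquad, Mstate_isHermitian c, fun μ hμ => spectrum_subset_pair_of_mul_eq_zero hquad hμ,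
    rootMultiplicity_charpoly_Mstate c hN hr2⟩
end

section
/- Let N be an even positive integer and c = (c₁,c₂,c₃) ∈ ℝ³. For any computational basis index i : Fin N → Fin 2 with parity p = (Σₖ i(k)) mod 2, and for each sign s ∈ {+1,−1}, the vector v = (1/√2)(e_i + s·σ₁^{⊗N} e_i), where e_i is the corresponding standard basis vector of ℂ^{2^N}, is an eigenvector of ϖ(c) with eigenvalue 2^{−N}(1 + s·c₁ + s·(−1)^{N/2}·(−1)^p·c₂ + (−1)^p·c₃). -/
/-!
Write `ī` for the complement of the bit string `i`. The matrix `σ₁^{⊗N}` swaps `e_i` and `e_ī`,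
`σ₂^{⊗N}` maps `e_i` to `(√-1)^N (-1)^{|i|} e_ī`, and `σ₃^{⊗N}` maps `e_i` to `(-1)^{|i|} e_i`.
For even `N` the strings `i` and `ī` have the same parity, so on the plane spanned by `e_i` and
`e_ī` these three matrices act as `swap`, `β • swap` and `γ • id` with the same `β`, `γ` for both
basis vectors. Hence `e_i + s e_ī` (with `s² = 1`) is a common eigenvector, with eigenvalues
`s`, `s β` and `γ`, and the eigenvalue of `ϖ(c)` is the corresponding combination.
-/

open Matrix BigOperators Polynomial

section

variable {N : ℕ}

def bitFlip (i : Fin N → Fin 2) : Fin N → Fin 2 := fun k => i k + 1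

@[simp]
lemma bitFlip_bitFlip (i : Fin N → Fin 2) : bitFlip (bitFlip i) = i := by
  funext k
  have h : ∀ a : Fin 2, a + 1 + 1 = a := by decide
  exact h (i k)

lemma bitFlip_ne (hN : 0 < N) (i : Fin N → Fin 2) : bitFlip i ≠ i := fun h => by
  have h' : ∀ a : Fin 2, a + 1 ≠ a := by decide
  exact h' _ (congrFun h ⟨0, hN⟩)

lemma prod_neg_one_pow_bitFlip {R : Type*} [CommRing R] (hN : Even N) (i : Fin N → Fin 2) :
    ∏ k, (-1 : R) ^ (bitFlip i k : ℕ) = ∏ k, (-1 : R) ^ (i k : ℕ) := by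
  have h : ∀ a : Fin 2, (-1 : R) ^ ((a + 1 : Fin 2) : ℕ) = -(-1) ^ (a : ℕ) := by
    intro a; fin_cases a <;> simp
  simp only [bitFlip, h, Finset.prod_neg, Finset.card_univ, Fintype.card_fin, hN.neg_one_pow,
    one_mul]

lemma prod_neg_one_pow_eq_pow_mod_two {R : Type*} [CommRing R] (i : Fin N → Fin 2) :
    ∏ k, (-1 : R) ^ (i k : ℕ) = (-1) ^ ((∑ k, (i k : ℕ)) % 2) := by
  rw [Finset.prod_pow_eq_pow_sum, neg_one_pow_eq_pow_mod_two]

lemma kronPow_mulVec_single {A : Matrix (Fin 2) (Fin 2) ℂ} {π : Fin 2 → Fin 2} {w : Fin 2 → ℂ}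
    (hA : ∀ a b, A a b = if a = π b then w b else 0) (i : Fin N → Fin 2) :
    kronPow A N *ᵥ Pi.single i 1 = (∏ k, w (i k)) • Pi.single (π ∘ i) 1 := by
  ext j
  simp [kronPow, hA, Fintype.prod_ite_zero, Pi.single_apply, funext_iff]

def ghzVec (i : Fin N → Fin 2) (s : ℂ) : (Fin N → Fin 2) → ℂ :=
  Pi.single i 1 + s • Pi.single (bitFlip i) 1

lemma ghzVec_apply_self (hN : 0 < N) (i : Fin N → Fin 2) (s : ℂ) : ghzVec i s i = 1 := by
  simp [ghzVec, (bitFlip_ne hN i).symm]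

lemma kronPow_mulVec_ghzVec_of_antidiagonal {A : Matrix (Fin 2) (Fin 2) ℂ} {w : Fin 2 → ℂ}
    (hA : ∀ a b, A a b = if a = b + 1 then w b else 0) {i : Fin N → Fin 2}
    (hw : ∏ k, w (bitFlip i k) = ∏ k, w (i k)) {s : ℂ} (hs : s * s = 1) :
    kronPow A N *ᵥ ghzVec i s = (s * ∏ k, w (i k)) • ghzVec i s := by
  have hflip (j : Fin N → Fin 2) :
      kronPow A N *ᵥ Pi.single j 1 = (∏ k, w (j k)) • Pi.single (bitFlip j) 1 :=
    kronPow_mulVec_single hA j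
  rw [ghzVec, mulVec_add, mulVec_smul, hflip, hflip, bitFlip_bitFlip, hw]
  linear_combination (norm := module)
    hs • -((∏ k, w (i k)) • (Pi.single (bitFlip i) 1 : (Fin N → Fin 2) → ℂ))

lemma kronPow_mulVec_ghzVec_of_diagonal {A : Matrix (Fin 2) (Fin 2) ℂ} {w : Fin 2 → ℂ}
    (hA : ∀ a b, A a b = if a = b then w b else 0) {i : Fin N → Fin 2}
    (hw : ∏ k, w (bitFlip i k) = ∏ k, w (i k)) (s : ℂ) :
    kronPow A N *ᵥ ghzVec i s = (∏ k, w (i k)) • ghzVec i s := by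
  have hdiag (j : Fin N → Fin 2) :
      kronPow A N *ᵥ Pi.single j 1 = (∏ k, w (j k)) • Pi.single j 1 :=
    kronPow_mulVec_single (π := id) hA j
  rw [ghzVec, mulVec_add, mulVec_smul, hdiag, hdiag, hw]
  module

lemma pauli_zero_apply (a b : Fin 2) : pauli 0 a b = if a = b + 1 then 1 else 0 := by
  fin_cases a <;> fin_cases b <;> simp [pauli]

lemma pauli_one_apply (a b : Fin 2) :
    pauli 1 a b = if a = b + 1 then Complex.I * (-1) ^ (b : ℕ) else 0 := by
  fin_cases a <;> fin_cases b <;> simp [pauli]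

lemma pauli_two_apply (a b : Fin 2) : pauli 2 a b = if a = b then (-1) ^ (b : ℕ) else 0 := by
  fin_cases a <;> fin_cases b <;> simp [pauli]

lemma Mstate_mulVec_of_forall_eq_smul {c : Fin 3 → ℝ} {u : (Fin N → Fin 2) → ℂ}
    {μ : Fin 3 → ℂ} (h : ∀ j, kronPow (pauli j) N *ᵥ u = μ j • u) :
    Mstate N c *ᵥ u = (((2 : ℂ) ^ N)⁻¹ * (1 + ∑ j, (c j : ℂ) * μ j)) • u := by
  simp only [Mstate, smul_mulVec, add_mulVec, one_mulVec, sum_mulVec, h, smul_smul,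
    ← Finset.sum_smul]
  module

end

lemma Complex.I_pow_of_even {n : ℕ} (hn : Even n) : Complex.I ^ n = (-1) ^ (n / 2) := by
  rw [← Complex.I_sq, ← pow_mul, Nat.two_mul_div_two_of_even hn]

theorem stmt1 (N : ℕ) (hN : Even N) (hN0 : 0 < N) (c : Fin 3 → ℝ)
    (i : Fin N → Fin 2) (p : ℕ) (hp : p = (∑ k, (i k : ℕ)) % 2)
    (s : ℝ) (hs : s = 1 ∨ s = -1)
    (e : (Fin N → Fin 2) → ℂ) (he : e = fun j => if j = i then 1 else 0)
    (v : (Fin N → Fin 2) → ℂ)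
    (hv : v = ((Real.sqrt 2 : ℝ) : ℂ)⁻¹ • (e + (s : ℂ) • (kronPow (pauli 0) N).mulVec e)) :
    (Mstate N c).mulVec v =
      ((((2:ℝ)^N)⁻¹ *
        (1 + s * c 0 + s * (-1:ℝ)^(N/2) * (-1:ℝ)^p * c 1 + (-1:ℝ)^p * c 2) : ℝ) : ℂ) • v
      ∧ v ≠ 0 := by
  have hss : (s : ℂ) * s = 1 := by rcases hs with rfl | rfl <;> norm_num
  have he' : e = Pi.single i 1 := he ▸ funext fun j => (Pi.single_apply i 1 j).symm
  have hv' : v = ((Real.sqrt 2 : ℝ) : ℂ)⁻¹ • ghzVec i s := by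
    rw [hv, he', kronPow_mulVec_single pauli_zero_apply, Finset.prod_const_one, one_smul]
    rfl
  have hparity : ∏ k, (-1 : ℂ) ^ (i k : ℕ) = (-1) ^ p := by
    rw [hp, prod_neg_one_pow_eq_pow_mod_two]
  have hμ : ∀ j, kronPow (pauli j) N *ᵥ ghzVec i s =
      ![(s : ℂ), s * ((-1) ^ (N / 2) * (-1) ^ p), (-1) ^ p] j • ghzVec i s := by
    intro j
    fin_cases j
    · simpa using kronPow_mulVec_ghzVec_of_antidiagonal pauli_zero_apply (by simp) hss
    · simpa [Finset.prod_mul_distrib, Complex.I_pow_of_even hN, hparity] using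
        kronPow_mulVec_ghzVec_of_antidiagonal (i := i) pauli_one_apply
          (by simp only [Finset.prod_mul_distrib, prod_neg_one_pow_bitFlip hN]) hss
    · simpa [hparity] using
        kronPow_mulVec_ghzVec_of_diagonal pauli_two_apply (prod_neg_one_pow_bitFlip hN i) s
  refine ⟨?_, ?_⟩
  · rw [hv', mulVec_smul, Mstate_mulVec_of_forall_eq_smul hμ, smul_comm, Fin.sum_univ_three]
    congr 2
    push_cast
    ring
  · rw [hv']
    intro h
    simpa [ghzVec_apply_self hN0] using congrFun h i
end

section
/- For all signs a, b ∈ {−1,1}, the Hadamard (componentwise) product of the tetrahedra T_a and T_b equals the tetrahedron T_{ab}: T_a ∘ T_b = T_{ab}. In particular T₋₁ ∘ T₋₁ = T₁, T₁ ∘ T₁ = T₁, and T₁ ∘ T₋₁ = T₋₁. -/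
open BigOperators

/-- The tetrahedron `T_s`: convex hull of `(1,s,1), (−1,−s,1), (1,−s,−1), (−1,s,−1)`. -/
noncomputable def tet (s : ℝ) : Set (Fin 3 → ℝ) :=
  convexHull ℝ {![1, s, 1], ![-1, -s, 1], ![1, -s, -1], ![-1, s, -1]}

/-- Hadamard (componentwise) product of two subsets of ℝ³. -/
def hadSet (A B : Set (Fin 3 → ℝ)) : Set (Fin 3 → ℝ) :=
  {x | ∃ a ∈ A, ∃ b ∈ B, x = a * b}

/-!
Every vertex `(ε₁, ε₂ s, ε₃)` of `T_s` has signs with `ε₁ ε₂ ε₃ = 1`, so the product of a vertex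
of `T_a` and a vertex of `T_b` is a vertex of `T_{ab}`. Since multiplication is bilinear, the
product of two convex hulls lies in the convex hull of the products of their points, whence
`T_a ∘ T_b ⊆ T_{ab}`. Conversely, `v = (1, b, 1)` is a vertex of `T_b` with `v ∘ v = 1`, and
`x ∘ v ∈ T_{ab} ∘ T_b ⊆ T_a` for `x ∈ T_{ab}`, so `x = (x ∘ v) ∘ v ∈ T_a ∘ T_b`.
-/

open Pointwise

section ConvexHullMul

variable {𝕜 A : Type*} [CommSemiring 𝕜] [PartialOrder 𝕜] [Semiring A] [Algebra 𝕜 A]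

theorem mul_mem_convexHull_mul_of_mem_convexHull {s t : Set A} {x y : A}
    (hx : x ∈ convexHull 𝕜 s) (hy : y ∈ t) : x * y ∈ convexHull 𝕜 (s * t) := by
  have hsub : convexHull 𝕜 s ⊆ (· * y) ⁻¹' convexHull 𝕜 (s * t) :=
    convexHull_min (fun x' hx' => subset_convexHull 𝕜 _ (Set.mul_mem_mul hx' hy))
      ((convex_convexHull 𝕜 _).linear_preimage (LinearMap.mulRight 𝕜 y))
  exact hsub hx

theorem convexHull_mul_convexHull_subset (s t : Set A) :
    convexHull 𝕜 s * convexHull 𝕜 t ⊆ convexHull 𝕜 (s * t) := by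
  rintro _ ⟨x, hx, y, hy, rfl⟩
  have hsub : convexHull 𝕜 t ⊆ (x * ·) ⁻¹' convexHull 𝕜 (s * t) :=
    convexHull_min (fun y' hy' => mul_mem_convexHull_mul_of_mem_convexHull hx hy')
      ((convex_convexHull 𝕜 _).linear_preimage (LinearMap.mulLeft 𝕜 x))
  exact hsub hy

end ConvexHullMul

theorem hadSet_eq_mul (A B : Set (Fin 3 → ℝ)) : hadSet A B = A * B := by
  ext x
  simp only [hadSet, Set.mem_ofPred_eq, Set.mem_mul, eq_comm]

def tetVertices (s : ℝ) : Set (Fin 3 → ℝ) :=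
  {![1, s, 1], ![-1, -s, 1], ![1, -s, -1], ![-1, s, -1]}

theorem tet_eq_convexHull_tetVertices (s : ℝ) : tet s = convexHull ℝ (tetVertices s) := rfl

theorem vec3_mul_vec3 (x y z x' y' z' : ℝ) :
    (![x, y, z] * ![x', y', z'] : Fin 3 → ℝ) = ![x * x', y * y', z * z'] := by
  ext i; fin_cases i <;> rfl

theorem tetVertices_mul_tetVertices_subset (a b : ℝ) :
    tetVertices a * tetVertices b ⊆ tetVertices (a * b) := by
  rintro _ ⟨u, hu, w, hw, rfl⟩
  simp only [tetVertices, Set.mem_insert_iff, Set.mem_singleton_iff] at hu hw ⊢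
  rcases hu with rfl | rfl | rfl | rfl <;> rcases hw with rfl | rfl | rfl | rfl <;>
    simp only [vec3_mul_vec3] <;> norm_num

theorem tet_mul_tet_subset (a b : ℝ) : tet a * tet b ⊆ tet (a * b) := by
  simp only [tet_eq_convexHull_tetVertices]
  exact (convexHull_mul_convexHull_subset _ _).trans
    (convexHull_mono (tetVertices_mul_tetVertices_subset a b))

theorem stmt7_general (a b : ℝ) (hb : b = 1 ∨ b = -1) :
    hadSet (tet a) (tet b) = tet (a * b) := by
  rw [hadSet_eq_mul]
  refine (tet_mul_tet_subset a b).antisymm fun x hx => ?_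
  have hbb : b * b = 1 := by rcases hb with rfl | rfl <;> norm_num
  set v : Fin 3 → ℝ := ![1, b, 1]
  have hv : v ∈ tet b := subset_convexHull ℝ _ (by simp [v])
  have hvv : v * v = 1 := by
    rw [vec3_mul_vec3, hbb]
    ext i; fin_cases i <;> simp
  have hxv : x * v ∈ tet a := by
    simpa [mul_assoc, hbb] using tet_mul_tet_subset (a * b) b (Set.mul_mem_mul hx hv)
  exact ⟨x * v, hxv, v, hv, show x * v * v = x by rw [mul_assoc, hvv, mul_one]⟩

theorem stmt7 (a b : ℝ) (ha : a = 1 ∨ a = -1) (hb : b = 1 ∨ b = -1) :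
    hadSet (tet a) (tet b) = tet (a * b) :=
  stmt7_general a b hb
end

section
/- For each sign s ∈ {−1,1}, the Hadamard (componentwise) product of the tetrahedron T_s with the closed Euclidean unit ball B₁ of ℝ³ equals B₁: T_s ∘ B₁ = B₁. -/
open BigOperators

/-- The closed Euclidean unit ball of ℝ³. -/
def euclBall : Set (Fin 3 → ℝ) := {x | x 0 ^ 2 + x 1 ^ 2 + x 2 ^ 2 ≤ 1}

lemma tet_bound (s : ℝ) (hs : s = 1 ∨ s = -1) :
    ∀ a ∈ tet s, ∀ i, a i ^ 2 ≤ 1 := by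
  intro a ha i
  have hC : tet s ⊆ Set.pi Set.univ (fun _ : Fin 3 => Set.Icc (-1:ℝ) 1) := by
    apply convexHull_min _ (convex_pi fun i _ => convex_Icc _ _)
    intro v hv j _
    rcases hs with rfl | rfl <;>
      rcases hv with rfl | rfl | rfl | rfl <;>
        fin_cases j <;>
          simp [Matrix.cons_val_zero, Matrix.cons_val_one, Matrix.head_cons]
  have h := hC ha i (Set.mem_univ i)
  nlinarith [h.1, h.2]

theorem stmt8 (s : ℝ) (hs : s = 1 ∨ s = -1) :
    hadSet (tet s) euclBall = euclBall := by
  have hs2 : s ^ 2 = 1 := by rcases hs with rfl | rfl <;> norm_num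
  ext x
  constructor
  · rintro ⟨a, ha, b, hb, rfl⟩
    simp only [euclBall, Set.mem_setOf_eq, Pi.mul_apply] at hb ⊢
    have h0 := tet_bound s hs a ha 0
    have h1 := tet_bound s hs a ha 1
    have h2 := tet_bound s hs a ha 2
    nlinarith [sq_nonneg (b 0), sq_nonneg (b 1), sq_nonneg (b 2)]
  · intro hx
    refine ⟨![1, s, 1], subset_convexHull ℝ _ (Set.mem_insert _ _),
      fun i => ![1, s, 1] i * x i, ?_, ?_⟩
    · simp only [euclBall, Set.mem_setOf_eq] at hx ⊢
      simp only [Matrix.cons_val_zero, Matrix.cons_val_one, Matrix.head_cons,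
        Matrix.cons_val_two, Matrix.tail_cons]
      nlinarith [sq_nonneg (x 1)]
    · funext i
      fin_cases i <;>
        simp [Pi.mul_apply, Matrix.cons_val_zero, Matrix.cons_val_one, Matrix.head_cons]
      rw [← mul_assoc, ← sq, hs2, one_mul]
end

section
/- For every integer n ≥ 2, the convex hull of the set {b⁽¹⁾ ∘ b⁽²⁾ ∘ … ∘ b⁽ⁿ⁾ : each b⁽ⁱ⁾ lies in the closed Euclidean unit ball B₁ of ℝ³} (the n-fold Hadamard product being taken componentwise) equals the closed ℓ¹ unit ball (octahedron) O₁ = {x ∈ ℝ³ : |x₁|+|x₂|+|x₃| ≤ 1}. -/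
/-!
Every Hadamard product of at least two vectors of the Euclidean unit ball lies in the octahedron:
all coordinates of the factors are bounded by `1`, so `|∏ᵢ bᵢⱼ| ≤ |b₁ⱼ| |b₂ⱼ| ≤ (b₁ⱼ² + b₂ⱼ²) / 2`,
and summing over `j` gives at most `1`. Conversely the products contain `0` and every `t eⱼ` with
`|t| ≤ 1` (take `t eⱼ` as one factor and `eⱼ` as the others), and
`x = ∑ⱼ |xⱼ| (sign xⱼ) eⱼ + (1 - ∑ⱼ |xⱼ|) 0` is a convex combination of such points.
-/

open BigOperators Finset

theorem Convex.sum_smul_mem_of_sum_le_one {𝕜 E ι : Type*} [Field 𝕜] [LinearOrder 𝕜]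
    [IsStrictOrderedRing 𝕜] [AddCommGroup E] [Module 𝕜 E] [Fintype ι]
    {s : Set E} (hs : Convex 𝕜 s) (h₀ : (0 : E) ∈ s) {w : ι → 𝕜} {z : ι → E}
    (hw₀ : ∀ i, 0 ≤ w i) (hw₁ : ∑ i, w i ≤ 1) (hz : ∀ i, z i ∈ s) :
    ∑ i, w i • z i ∈ s := by
  -- put the missing weight `1 - ∑ i, w i` on the extra point `0`
  have h := hs.sum_mem (t := univ) (w := fun o : Option ι => o.elim (1 - ∑ i, w i) w)
    (z := fun o => o.elim 0 z) (by rintro (_ | i) - <;> simp [hw₀, hw₁])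
    (by simp [Fintype.sum_option]) (by rintro (_ | i) - <;> simp [h₀, hz])
  simpa [Fintype.sum_option] using h

theorem convex_setOf_sum_abs_le_one (ι : Type*) [Fintype ι] :
    Convex ℝ {x : ι → ℝ | ∑ j, |x j| ≤ 1} := by
  intro x hx y hy a b ha hb hab
  calc ∑ j, |a * x j + b * y j| ≤ ∑ j, (a * |x j| + b * |y j|) := by
        gcongr with j
        calc |a * x j + b * y j| ≤ |a * x j| + |b * y j| := abs_add_le _ _
          _ = a * |x j| + b * |y j| := by rw [abs_mul, abs_mul, abs_of_nonneg ha, abs_of_nonneg hb]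
    _ = a * ∑ j, |x j| + b * ∑ j, |y j| := by rw [sum_add_distrib, mul_sum, mul_sum]
    _ ≤ a * 1 + b * 1 := by gcongr <;> assumption
    _ = 1 := by rw [mul_one, mul_one, hab]

theorem setOf_sum_abs_le_one_subset {ι : Type*} [Fintype ι] [DecidableEq ι] {s : Set (ι → ℝ)}
    (hs : Convex ℝ s) (h₀ : 0 ∈ s) (hsingle : ∀ j (t : ℝ), |t| ≤ 1 → Pi.single j t ∈ s) :
    {x : ι → ℝ | ∑ j, |x j| ≤ 1} ⊆ s := by
  intro x hx
  have hx_eq : x = ∑ j, |x j| • Pi.single j (SignType.sign (x j) : ℝ) := by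
    ext k
    simp [Finset.sum_apply, Pi.single_apply]
  rw [hx_eq]
  exact hs.sum_smul_mem_of_sum_le_one h₀ (fun j => abs_nonneg _) hx
    fun j => hsingle j _ (by rcases lt_trichotomy (x j) 0 with h | h | h <;> simp [h])

theorem abs_le_one_of_sum_sq_le_one {ι : Type*} [Fintype ι] {v : ι → ℝ} (hv : ∑ j, v j ^ 2 ≤ 1)
    (j : ι) : |v j| ≤ 1 :=
  (sq_le_one_iff_abs_le_one _).1 <|
    (single_le_sum (fun k _ => sq_nonneg (v k)) (mem_univ j)).trans hv

theorem abs_prod_le_abs_mul_abs {κ : Type*} [Fintype κ] {f : κ → ℝ} (hf : ∀ i, |f i| ≤ 1)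
    {i₀ i₁ : κ} (h : i₀ ≠ i₁) : |∏ i, f i| ≤ |f i₀| * |f i₁| := by
  classical
  rw [abs_prod, ← prod_pair h (f := fun i => |f i|)]
  exact prod_le_prod_of_subset_of_le_one (subset_univ _) (fun i _ => abs_nonneg _)
    fun i _ _ => hf i

theorem sum_abs_prod_le_one {κ ι : Type*} [Fintype κ] [Fintype ι] {i₀ i₁ : κ} (h : i₀ ≠ i₁)
    {b : κ → ι → ℝ} (hb : ∀ i, ∑ j, b i j ^ 2 ≤ 1) : ∑ j, |∏ i, b i j| ≤ 1 :=
  calc ∑ j, |∏ i, b i j| ≤ ∑ j, |b i₀ j| * |b i₁ j| :=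
        sum_le_sum fun j _ =>
          abs_prod_le_abs_mul_abs (fun i => abs_le_one_of_sum_sq_le_one (hb i) j) h
    _ ≤ ∑ j, (b i₀ j ^ 2 + b i₁ j ^ 2) / 2 := by
        gcongr with j
        nlinarith [two_mul_le_add_sq |b i₀ j| |b i₁ j|, sq_abs (b i₀ j), sq_abs (b i₁ j)]
    _ = (∑ j, b i₀ j ^ 2 + ∑ j, b i₁ j ^ 2) / 2 := by rw [← sum_add_distrib, sum_div]
    _ ≤ 1 := by linarith [hb i₀, hb i₁]

def hadamardProducts (κ ι : Type*) [Fintype κ] [Fintype ι] : Set (ι → ℝ) :=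
  {x | ∃ b : κ → ι → ℝ, (∀ i, ∑ j, b i j ^ 2 ≤ 1) ∧ x = fun j => ∏ i, b i j}

section hadamardProducts

variable {κ ι : Type*} [Fintype κ] [Fintype ι]

theorem hadamardProducts_subset [Nontrivial κ] :
    hadamardProducts κ ι ⊆ {x | ∑ j, |x j| ≤ 1} := by
  rintro _ ⟨b, hb, rfl⟩
  obtain ⟨i₀, i₁, h⟩ := exists_pair_ne κ
  exact sum_abs_prod_le_one h hb

theorem zero_mem_hadamardProducts [Nonempty κ] : 0 ∈ hadamardProducts κ ι :=
  ⟨0, fun i => by simp, by ext j; simp [zero_pow Fintype.card_ne_zero]⟩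

theorem single_mem_hadamardProducts [Nonempty κ] [DecidableEq ι] (j : ι) {t : ℝ} (ht : |t| ≤ 1) :
    Pi.single j t ∈ hadamardProducts κ ι := by
  classical
  obtain ⟨i₀⟩ := ‹Nonempty κ›
  refine ⟨fun i => Pi.single j (if i = i₀ then t else 1), fun i => ?_, ?_⟩
  · simp only [Pi.single_apply, ite_pow, zero_pow two_ne_zero, sum_ite_eq', mem_univ, if_true]
    split_ifs
    · exact (sq_le_one_iff_abs_le_one t).2 ht
    · norm_num
  · ext k
    simp [Pi.single_apply]

theorem convexHull_hadamardProducts [Nontrivial κ] [DecidableEq ι] :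
    convexHull ℝ (hadamardProducts κ ι) = {x | ∑ j, |x j| ≤ 1} :=
  subset_antisymm (convexHull_min hadamardProducts_subset (convex_setOf_sum_abs_le_one ι))
    (setOf_sum_abs_le_one_subset (convex_convexHull ℝ _) (subset_convexHull ℝ _ zero_mem_hadamardProducts)
      fun j _ ht => subset_convexHull ℝ _ (single_mem_hadamardProducts j ht))

end hadamardProducts

theorem stmt10 (n : ℕ) (hn : 2 ≤ n) :
    convexHull ℝ {x : Fin 3 → ℝ | ∃ b : Fin n → Fin 3 → ℝ,
        (∀ i, (b i 0) ^ 2 + (b i 1) ^ 2 + (b i 2) ^ 2 ≤ 1) ∧ x = fun j => ∏ i, b i j}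
      = {x : Fin 3 → ℝ | |x 0| + |x 1| + |x 2| ≤ 1} := by
  have : Nontrivial (Fin n) := Fin.nontrivial_iff_two_le.mpr hn
  simpa only [hadamardProducts, Fin.sum_univ_three] using
    convexHull_hadamardProducts (κ := Fin n) (ι := Fin 3)
end

section
/- Let n ≥ 2 and let p : Fin n → ℝ be a probability vector with p k > 1/2 for some index k. Then the infimum, over all probability vectors q : Fin n → ℝ satisfying q i ≤ 1/2 for every i, of the total variation distance (1/2)·Σᵢ |p i − q i| equals p k − 1/2, and this infimum is attained. -/
open BigOperators

theorem stmt13 (n : ℕ) (hn : 2 ≤ n) (p : Fin n → ℝ)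
    (hp0 : ∀ i, 0 ≤ p i) (hp1 : ∑ i, p i = 1) (k : Fin n) (hk : 1/2 < p k) :
    IsLeast {d : ℝ | ∃ q : Fin n → ℝ, (∀ i, 0 ≤ q i) ∧ (∑ i, q i = 1) ∧
        (∀ i, q i ≤ 1/2) ∧ d = (1/2) * ∑ i, |p i - q i|}
      (p k - 1/2) := by
  constructor
  · -- membership: construct optimal q
    obtain ⟨j, hj⟩ : ∃ j : Fin n, j ≠ k := by
      have : 1 < Fintype.card (Fin n) := by simp; omega
      exact Fintype.exists_ne_of_one_lt_card this k
    have hjk : p j + p k ≤ 1 := by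
      have hsub : ({j, k} : Finset (Fin n)) ⊆ Finset.univ := Finset.subset_univ _
      have := Finset.sum_le_sum_of_subset_of_nonneg hsub
        (fun i _ _ => hp0 i)
      rw [Finset.sum_pair hj, hp1] at this
      exact this
    refine ⟨fun i => if i = k then 1/2 else if i = j then p j + (p k - 1/2) else p i,
      ?_, ?_, ?_, ?_⟩
    · intro i
      by_cases h1 : i = k
      · simp [h1]
      · by_cases h2 : i = j
        · simp [h2, hj]
          nlinarith [hp0 j]
        · simp [h1, h2, hp0 i]
    · have key : ∀ i ∈ Finset.univ,
        (if i = k then (1:ℝ)/2 else if i = j then p j + (p k - 1/2) else p i)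
          = p i + (if i = k then 1/2 - p k else 0) + (if i = j then p k - 1/2 else 0) := by
        intro i _
        by_cases h1 : i = k
        · subst h1
          simp [Ne.symm hj]
        · by_cases h2 : i = j
          · subst h2; simp [h1]
          · simp [h1, h2]
      rw [Finset.sum_congr rfl key]
      rw [Finset.sum_add_distrib, Finset.sum_add_distrib, hp1]
      simp [Finset.sum_ite_eq']
      ring
    · intro i
      by_cases h1 : i = k
      · simp [h1]
      · by_cases h2 : i = j
        · simp [h2, hj]
          nlinarith [hp0 j]
        · simp [h1, h2]
          -- p i ≤ 1/2 since p i + p k ≤ 1 and p k > 1/2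
          have hsub : ({i, k} : Finset (Fin n)) ⊆ Finset.univ := Finset.subset_univ _
          have := Finset.sum_le_sum_of_subset_of_nonneg hsub (fun m _ _ => hp0 m)
          rw [Finset.sum_pair h1, hp1] at this
          linarith
    · have hzero : ∀ i ∈ Finset.univ, i ∉ ({j, k} : Finset (Fin n)) →
        |p i - (if i = k then (1:ℝ)/2 else if i = j then p j + (p k - 1/2) else p i)| = 0 := by
        intro i _ hi
        simp only [Finset.mem_insert, Finset.mem_singleton, not_or] at hi
        simp [hi.1, hi.2]
      rw [← Finset.sum_subset (Finset.subset_univ ({j, k} : Finset (Fin n))) hzero,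
        Finset.sum_pair hj]
      simp [hj, Ne.symm hj]
      rw [abs_of_nonpos (by linarith), abs_of_nonneg (by linarith)]
      ring
  · -- lower bound
    rintro d ⟨q, hq0, hq1, hq2, rfl⟩
    have hmem : k ∈ Finset.univ := Finset.mem_univ k
    have hsplit : ∑ i, |p i - q i|
        = |p k - q k| + ∑ i ∈ Finset.univ.erase k, |p i - q i| :=
      (Finset.add_sum_erase _ _ hmem).symm
    have hrest : ∑ i ∈ Finset.univ.erase k, (p i - q i) = q k - p k := by
      have h1 : ∑ i ∈ Finset.univ.erase k, (p i - q i)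
          = (∑ i, (p i - q i)) - (p k - q k) :=
        (Finset.sum_erase_eq_sub hmem)
      rw [h1, Finset.sum_sub_distrib, hp1, hq1]
      ring
    have habs : |q k - p k| ≤ ∑ i ∈ Finset.univ.erase k, |p i - q i| := by
      calc |q k - p k| = |∑ i ∈ Finset.univ.erase k, (p i - q i)| := by rw [hrest]
        _ ≤ ∑ i ∈ Finset.univ.erase k, |p i - q i| := Finset.abs_sum_le_sum_abs _ _
    have h1 : p k - q k ≤ |p k - q k| := le_abs_self _
    have h2 : p k - q k ≤ |q k - p k| := by rw [abs_sub_comm]; exact h1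
    have hqk : q k ≤ 1/2 := hq2 k
    rw [hsplit]
    linarith
end

section
/- Let n ≥ 2 and let p : Fin n → ℝ be a probability vector with p k > 1/2 for some index k. Then the infimum, over all probability vectors q : Fin n → ℝ satisfying q i ≤ 1/2 for every i and q i > 0 whenever p i > 0, of the Kullback–Leibler divergence Σ_{i : p i > 0} p i · log₂(p i / q i) equals 1 + p k · log₂(p k) + (1 − p k) · log₂(1 − p k) (with the convention 0·log₂ 0 = 0 when p k = 1), and this infimum is attained. -/
open BigOperators Finset

theorem stmt14 (n : ℕ) (hn : 2 ≤ n) (p : Fin n → ℝ)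
    (hp0 : ∀ i, 0 ≤ p i) (hp1 : ∑ i, p i = 1) (k : Fin n) (hk : 1/2 < p k) :
    IsLeast {d : ℝ | ∃ q : Fin n → ℝ, (∀ i, 0 ≤ q i) ∧ (∑ i, q i = 1) ∧
        (∀ i, q i ≤ 1/2) ∧ (∀ i, 0 < p i → 0 < q i) ∧
        d = ∑ i ∈ Finset.univ.filter (fun i => 0 < p i), p i * Real.logb 2 (p i / q i)}
      (1 + p k * Real.logb 2 (p k) + (1 - p k) * Real.logb 2 (1 - p k)) := by
  classical
  have hPpos : (0:ℝ) < p k := by linarith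
  have hrest : ∑ i ∈ univ.erase k, p i = 1 - p k := by
    have h := Finset.add_sum_erase univ p (mem_univ k)
    rw [hp1] at h; linarith
  have hP1 : p k ≤ 1 := by
    have h0 : 0 ≤ ∑ i ∈ univ.erase k, p i := Finset.sum_nonneg fun i _ => hp0 i
    linarith
  set S := univ.filter (fun i => 0 < p i) with hS
  have hkS : k ∈ S := mem_filter.mpr ⟨mem_univ k, hPpos⟩
  have hSsum : ∑ i ∈ S, p i = 1 := by
    rw [hS, Finset.sum_filter_of_ne (fun i _ h => lt_of_le_of_ne (hp0 i) (Ne.symm h)), hp1]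
  rcases eq_or_lt_of_le hP1 with hP1e | hP1l
  · -- case p k = 1
    have hr0 : ∑ i ∈ univ.erase k, p i = 0 := by rw [hrest, ← hP1e]; ring
    have hz : ∀ i ∈ univ.erase k, p i = 0 :=
      (Finset.sum_eq_zero_iff_of_nonneg (fun j _ => hp0 j)).1 hr0
    have hSk : S = {k} := by
      apply Finset.eq_singleton_iff_unique_mem.mpr
      refine ⟨hkS, fun i hi => ?_⟩
      by_contra hne
      have h0 : p i = 0 := hz i (mem_erase.mpr ⟨hne, mem_univ i⟩)
      have hip := (mem_filter.mp hi).2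
      rw [h0] at hip; exact lt_irrefl 0 hip
    have htarget : 1 + p k * Real.logb 2 (p k) + (1 - p k) * Real.logb 2 (1 - p k) = 1 := by
      rw [← hP1e]; simp [← hP1e]
    rw [htarget]
    obtain ⟨j, hj⟩ := Fintype.exists_ne_of_one_lt_card (by simp; omega) k
    constructor
    · refine ⟨fun i => if i = k then 1/2 else if i = j then 1/2 else 0, ?_, ?_, ?_, ?_, ?_⟩
      · intro i; by_cases h1 : i = k <;> by_cases h2 : i = j <;> norm_num [h1, h2]
      · rw [← Finset.add_sum_erase univ _ (mem_univ k)]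
        have h2 : ∑ i ∈ univ.erase k, (if i = k then (1:ℝ)/2 else if i = j then 1/2 else 0)
            = ∑ i ∈ univ.erase k, (if i = j then (1:ℝ)/2 else 0) := by
          apply Finset.sum_congr rfl
          intro i hi
          rw [if_neg (mem_erase.mp hi).1]
        rw [h2, Finset.sum_ite_eq' (univ.erase k) j]
        simp [hj]
        norm_num
      · intro i; by_cases h1 : i = k <;> by_cases h2 : i = j <;> norm_num [h1, h2]
      · intro i hpi
        rcases eq_or_ne i k with rfl | hik
        · simp
        · exfalso
          have := hz i (mem_erase.mpr ⟨hik, mem_univ i⟩)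
          rw [this] at hpi; exact lt_irrefl 0 hpi
      · have hqk : (fun i => if i = k then (1:ℝ)/2 else if i = j then 1/2 else 0) k = 1/2 :=
          if_pos rfl
        rw [hSk, Finset.sum_singleton, hqk, hP1e]
        have h22 : (1:ℝ)/(1/2) = 2 := by norm_num
        rw [h22, one_mul, Real.logb_self_eq_one (by norm_num)]
    · rintro d ⟨q, hq0, hq1, hq2, hq3, rfl⟩
      rw [hSk, Finset.sum_singleton]
      have hqk : 0 < q k := hq3 k hPpos
      have h2 : (2:ℝ) ≤ p k / q k := by
        rw [le_div_iff₀ hqk]; linarith [hq2 k]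
      calc (1:ℝ) = Real.logb 2 2 := (Real.logb_self_eq_one (by norm_num)).symm
        _ ≤ Real.logb 2 (p k / q k) := Real.logb_le_logb_of_le (by norm_num) (by norm_num) h2
        _ ≤ p k * Real.logb 2 (p k / q k) := by
            nlinarith [Real.logb_le_logb_of_le (show (1:ℝ)<2 by norm_num) (show (0:ℝ)<2 by norm_num) h2,
              Real.logb_self_eq_one (show (1:ℝ)<2 by norm_num)]
  · -- case p k < 1
    set c : ℝ := 2 * (1 - p k) with hcdef
    have hc : 0 < c := by rw [hcdef]; linarith
    set qs : Fin n → ℝ := fun i => if i = k then 1/2 else p i / c with hqsdef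
    have hqsk : qs k = 1/2 := if_pos rfl
    have hqsne : ∀ i, i ≠ k → qs i = p i / c := fun i h => if_neg h
    have hSerase : ∑ i ∈ S.erase k, p i = 1 - p k := by
      rw [hS, ← Finset.filter_erase,
        Finset.sum_filter_of_ne (fun i _ h => lt_of_le_of_ne (hp0 i) (Ne.symm h)), hrest]
    have hqspos : ∀ i ∈ S, 0 < qs i := by
      intro i hi
      rcases eq_or_ne i k with rfl | hik
      · rw [hqsk]; norm_num
      · rw [hqsne i hik]; exact div_pos (mem_filter.mp hi).2 hc
    have hval : ∑ i ∈ S, p i * Real.logb 2 (p i / qs i)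
        = 1 + p k * Real.logb 2 (p k) + (1 - p k) * Real.logb 2 (1 - p k) := by
      rw [← Finset.add_sum_erase S _ hkS]
      have hterm : ∀ i ∈ S.erase k, p i * Real.logb 2 (p i / qs i)
          = p i * Real.logb 2 c := by
        intro i hi
        obtain ⟨hik, hiS⟩ := mem_erase.mp hi
        have hpi : 0 < p i := (mem_filter.mp hiS).2
        rw [hqsne i hik]
        congr 1
        rw [div_div_eq_mul_div, mul_comm (p i) c, mul_div_assoc, div_self hpi.ne', mul_one]
      rw [Finset.sum_congr rfl hterm, ← Finset.sum_mul, hSerase, hqsk]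
      have h2 : p k / (1/2 : ℝ) = 2 * p k := by ring
      have h3 : Real.logb 2 (2 * p k) = 1 + Real.logb 2 (p k) := by
        rw [Real.logb_mul (by norm_num) hPpos.ne', Real.logb_self_eq_one (by norm_num)]
      have h4 : Real.logb 2 c = 1 + Real.logb 2 (1 - p k) := by
        rw [hcdef, Real.logb_mul (by norm_num) (by linarith), Real.logb_self_eq_one (by norm_num)]
      rw [h2, h3, h4]; ring
    constructor
    · refine ⟨qs, ?_, ?_, ?_, ?_, hval.symm⟩
      · intro i
        rcases eq_or_ne i k with rfl | hik
        · rw [hqsk]; norm_num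
        · rw [hqsne i hik]; exact div_nonneg (hp0 i) hc.le
      · rw [← Finset.add_sum_erase univ qs (mem_univ k), hqsk]
        have h2 : ∑ i ∈ univ.erase k, qs i = ∑ i ∈ univ.erase k, p i / c := by
          apply Finset.sum_congr rfl
          intro i hi
          exact hqsne i (mem_erase.mp hi).1
        rw [h2, ← Finset.sum_div, hrest, hcdef]
        have hne : (1:ℝ) - p k ≠ 0 := by linarith
        field_simp
        ring
      · intro i
        rcases eq_or_ne i k with rfl | hik
        · rw [hqsk]
        · rw [hqsne i hik, div_le_iff₀ hc]
          have hle : p i ≤ ∑ j ∈ univ.erase k, p j :=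
            Finset.single_le_sum (fun j _ => hp0 j) (mem_erase.mpr ⟨hik, mem_univ i⟩)
          rw [hrest] at hle
          rw [hcdef]; linarith
      · intro i hpi
        rcases eq_or_ne i k with rfl | hik
        · rw [hqsk]; norm_num
        · rw [hqsne i hik]; exact div_pos hpi hc
    · rintro d ⟨q, hq0, hq1, hq2, hq3, rfl⟩
      rw [← hval]
      have hsplit : ∀ i ∈ S, p i * Real.logb 2 (p i / q i)
          = p i * Real.logb 2 (p i / qs i) + p i * Real.logb 2 (qs i / q i) := by
        intro i hi
        have hpi := (mem_filter.mp hi).2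
        have hqi := hq3 i hpi
        have hqsi := hqspos i hi
        rw [Real.logb_div hpi.ne' hqi.ne', Real.logb_div hpi.ne' hqsi.ne',
          Real.logb_div hqsi.ne' hqi.ne']
        ring
      rw [Finset.sum_congr rfl hsplit, Finset.sum_add_distrib]
      have hlog2 : (0:ℝ) < Real.log 2 := Real.log_pos one_lt_two
      have hpt : ∀ i ∈ S, p i * ((1 - q i / qs i)/Real.log 2) ≤ p i * Real.logb 2 (qs i / q i) := by
        intro i hi
        have hpi := (mem_filter.mp hi).2
        have hqi := hq3 i hpi
        have hqsi := hqspos i hi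
        apply mul_le_mul_of_nonneg_left _ hpi.le
        rw [Real.logb, div_le_div_iff_of_pos_right hlog2]
        have h1 := Real.log_le_sub_one_of_pos (div_pos hqi hqsi)
        have h2 : Real.log (qs i / q i) = - Real.log (q i / qs i) := by
          rw [← Real.log_inv, inv_div]
        linarith
      have hTbound : ∑ i ∈ S, p i * (q i / qs i) ≤ 1 := by
        have hterm2 : ∀ i ∈ S.erase k, p i * (q i / qs i) = c * q i := by
          intro i hi
          obtain ⟨hik, hiS⟩ := mem_erase.mp hi
          have hpi : 0 < p i := (mem_filter.mp hiS).2
          rw [hqsne i hik]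
          field_simp
        rw [← Finset.add_sum_erase S _ hkS, Finset.sum_congr rfl hterm2, ← Finset.mul_sum, hqsk]
        have h5 : ∑ i ∈ S.erase k, q i ≤ 1 - q k := by
          have hsub : S.erase k ⊆ univ.erase k :=
            Finset.erase_subset_erase k (Finset.subset_univ S)
          have h6 := Finset.sum_le_sum_of_subset_of_nonneg hsub (fun i _ _ => hq0 i)
          have h7 : ∑ i ∈ univ.erase k, q i = 1 - q k := by
            have h := Finset.add_sum_erase univ q (mem_univ k)
            rw [hq1] at h; linarith
          linarith
        have h8 : 0 ≤ ∑ i ∈ S.erase k, q i := Finset.sum_nonneg fun i _ => hq0 i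
        have hqk0 : 0 ≤ q k := hq0 k
        have hqk2 := hq2 k
        rw [hcdef]
        nlinarith [mul_nonneg (show (0:ℝ) ≤ 1 - p k by linarith)
            (show (0:ℝ) ≤ 1 - q k - ∑ i ∈ S.erase k, q i by linarith),
          mul_nonneg (show (0:ℝ) ≤ 2 * p k - 1 by linarith)
            (show (0:ℝ) ≤ 1/2 - q k by linarith)]
      have hexp : ∑ i ∈ S, p i * ((1 - q i / qs i)/Real.log 2)
          = (∑ i ∈ S, p i - ∑ i ∈ S, p i * (q i / qs i)) / Real.log 2 := by
        rw [eq_div_iff hlog2.ne', Finset.sum_mul, ← Finset.sum_sub_distrib]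
        apply Finset.sum_congr rfl
        intro i _
        field_simp [hlog2.ne']
      have key : 0 ≤ ∑ i ∈ S, p i * Real.logb 2 (qs i / q i) := by
        have h9 := Finset.sum_le_sum hpt
        rw [hexp, hSsum] at h9
        have h10 : 0 ≤ (1 - ∑ i ∈ S, p i * (q i / qs i)) / Real.log 2 :=
          div_nonneg (by linarith) hlog2.le
        linarith
      linarith
end

section
/- Let n ≥ 2 and let p : Fin n → ℝ be a probability vector with p k > 1/2 for some index k. Then the supremum, over all probability vectors q : Fin n → ℝ satisfying q i ≤ 1/2 for every i, of the fidelity overlap Σᵢ √(p i · q i) equals (√(p k) + √(1 − p k))/√2, and this supremum is attained. Consequently the infimum of the infidelity 1 − (Σᵢ √(p i · q i))² over such q equals 1/2 − √(p k (1 − p k)), and the infimum of the squared Bures (equivalently squared Hellinger) distance 2(1 − Σᵢ √(p i · q i)) equals 2 − √2·(√(p k) + √(1 − p k)). -/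
open BigOperators Finset

lemma key_ineq (a b x y s : ℝ) (ha : 0 ≤ a) (hb : 0 ≤ b) (hx : 0 ≤ x) (hy : 0 ≤ y)
    (hs : 0 < s) (hs2 : s^2 = 1/2) (hab : b ≤ a) (hxy : x ≤ y) (hxys : x^2 + y^2 = 1) :
    a*x + b*y ≤ (a+b)*s := by
  have hA : 0 ≤ a*(s+y) - b*(s+x) := by nlinarith
  have hd : 0 ≤ 1/2 - x^2 := by nlinarith
  have hpx : 0 < s + x := by linarith
  have hpy : 0 < s + y := by linarith
  have key : ((a+b)*s - (a*x+b*y)) * ((s+x)*(s+y))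
      = (a*(s+y) - b*(s+x)) * (1/2 - x^2) := by
    linear_combination (b*s + b*x + a*s + a*y) * hs2 + (-(b*s) - b*x) * hxys
  nlinarith [mul_nonneg hA hd, mul_pos hpx hpy]

lemma upper_bound {n : ℕ} (p q : Fin n → ℝ) (hp0 : ∀ i, 0 ≤ p i) (hp1 : ∑ i, p i = 1)
    (k : Fin n) (hk : 1/2 < p k) (hq0 : ∀ i, 0 ≤ q i) (hq1 : ∑ i, q i = 1)
    (hq2 : ∀ i, q i ≤ 1/2) :
    ∑ i, Real.sqrt (p i * q i) ≤ (Real.sqrt (p k) + Real.sqrt (1 - p k)) / Real.sqrt 2 := by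
  have hpk1 : p k ≤ 1 := by
    have := Finset.single_le_sum (fun i _ => hp0 i) (Finset.mem_univ k)
    linarith
  have hSp : ∑ i ∈ univ.erase k, p i = 1 - p k := by
    have := Finset.sum_erase_add univ p (Finset.mem_univ k); linarith
  have hSq : ∑ i ∈ univ.erase k, q i = 1 - q k := by
    have := Finset.sum_erase_add univ q (Finset.mem_univ k); linarith
  have hsplit : ∑ i, Real.sqrt (p i * q i)
      = Real.sqrt (p k * q k) + ∑ i ∈ univ.erase k, Real.sqrt (p i * q i) :=
    (Finset.add_sum_erase _ _ (Finset.mem_univ k)).symm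
  have hCS : ∑ i ∈ univ.erase k, Real.sqrt (p i * q i)
      ≤ Real.sqrt (1 - p k) * Real.sqrt (1 - q k) := by
    have hnn : 0 ≤ ∑ i ∈ univ.erase k, Real.sqrt (p i * q i) :=
      Finset.sum_nonneg fun i _ => Real.sqrt_nonneg _
    have hsq : (∑ i ∈ univ.erase k, Real.sqrt (p i * q i)) ^ 2 ≤ (1 - p k) * (1 - q k) := by
      have := Finset.sum_mul_sq_le_sq_mul_sq (univ.erase k)
        (fun i => Real.sqrt (p i)) (fun i => Real.sqrt (q i))
      calc (∑ i ∈ univ.erase k, Real.sqrt (p i * q i)) ^ 2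
          = (∑ i ∈ univ.erase k, Real.sqrt (p i) * Real.sqrt (q i)) ^ 2 := by
            congr 1; exact Finset.sum_congr rfl fun i _ => Real.sqrt_mul (hp0 i) _
        _ ≤ (∑ i ∈ univ.erase k, Real.sqrt (p i) ^ 2) * ∑ i ∈ univ.erase k, Real.sqrt (q i) ^ 2 := this
        _ = (1 - p k) * (1 - q k) := by
            rw [Finset.sum_congr rfl fun i _ => Real.sq_sqrt (hp0 i),
              Finset.sum_congr rfl fun i _ => Real.sq_sqrt (hq0 i), hSp, hSq]
    calc ∑ i ∈ univ.erase k, Real.sqrt (p i * q i)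
        = Real.sqrt ((∑ i ∈ univ.erase k, Real.sqrt (p i * q i)) ^ 2) := by
          rw [Real.sqrt_sq hnn]
      _ ≤ Real.sqrt ((1 - p k) * (1 - q k)) := Real.sqrt_le_sqrt hsq
      _ = Real.sqrt (1 - p k) * Real.sqrt (1 - q k) := Real.sqrt_mul (by linarith [hpk1]) _
  have hkey : Real.sqrt (p k) * Real.sqrt (q k) + Real.sqrt (1 - p k) * Real.sqrt (1 - q k)
      ≤ (Real.sqrt (p k) + Real.sqrt (1 - p k)) * (Real.sqrt 2)⁻¹ := by
    apply key_ineq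
    · exact Real.sqrt_nonneg _
    · exact Real.sqrt_nonneg _
    · exact Real.sqrt_nonneg _
    · exact Real.sqrt_nonneg _
    · positivity
    · rw [inv_pow, Real.sq_sqrt (by norm_num : (0:ℝ) ≤ 2)]; norm_num
    · exact Real.sqrt_le_sqrt (by linarith)
    · exact Real.sqrt_le_sqrt (by linarith [hq2 k])
    · rw [Real.sq_sqrt (hq0 k), Real.sq_sqrt (by linarith [hq2 k] : (0:ℝ) ≤ 1 - q k)]; ring
  rw [hsplit, Real.sqrt_mul (hp0 k), div_eq_mul_inv]
  linarith [hCS, hkey]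

lemma witness {n : ℕ} (hn : 2 ≤ n) (p : Fin n → ℝ) (hp0 : ∀ i, 0 ≤ p i)
    (hp1 : ∑ i, p i = 1) (k : Fin n) (hk : 1/2 < p k) :
    ∃ q : Fin n → ℝ, (∀ i, 0 ≤ q i) ∧ (∑ i, q i = 1) ∧ (∀ i, q i ≤ 1/2) ∧
      ∑ i, Real.sqrt (p i * q i)
        = (Real.sqrt (p k) + Real.sqrt (1 - p k)) / Real.sqrt 2 := by
  classical
  have hpk1 : p k ≤ 1 := by
    have := Finset.single_le_sum (fun i _ => hp0 i) (Finset.mem_univ k)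
    linarith
  have hple : ∀ i, i ≠ k → p i ≤ 1 - p k := by
    intro i hi
    have hsub : ({i, k} : Finset (Fin n)) ⊆ univ := Finset.subset_univ _
    have := Finset.sum_le_sum_of_subset_of_nonneg hsub (fun j _ _ => hp0 j)
    rw [Finset.sum_pair hi, hp1] at this
    linarith
  by_cases hpk : p k = 1
  · -- degenerate case
    have : Nontrivial (Fin n) := Fin.nontrivial_iff_two_le.mpr hn
    obtain ⟨j, hj⟩ := exists_ne k
    have hpz : ∀ i, i ≠ k → p i = 0 := by
      intro i hi
      have := hple i hi
      have := hp0 i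
      linarith [hpk ▸ hple i hi]
    refine ⟨fun i => if i = k then 1/2 else if i = j then 1/2 else 0, ?_, ?_, ?_, ?_⟩
    · intro i; dsimp only; split <;> [norm_num; skip]; split <;> norm_num
    · have hz : ∀ i ∈ univ, i ∉ ({k, j} : Finset (Fin n)) →
          (if i = k then (1:ℝ)/2 else if i = j then 1/2 else 0) = 0 := by
        intro i _ hi
        simp only [Finset.mem_insert, Finset.mem_singleton, not_or] at hi
        rw [if_neg hi.1, if_neg hi.2]
      rw [← Finset.sum_subset (Finset.subset_univ ({k, j} : Finset (Fin n))) hz,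
        Finset.sum_pair hj.symm]
      rw [if_pos rfl, if_neg hj, if_pos rfl]; norm_num
    · intro i; dsimp only; split <;> [norm_num; skip]; split <;> norm_num
    · rw [Finset.sum_eq_single k]
      · dsimp only
        rw [if_pos rfl, hpk, Real.sqrt_mul (by norm_num), one_div, Real.sqrt_inv,
          Real.sqrt_one]
        norm_num [div_eq_mul_inv]
      · intro i _ hi
        dsimp only
        rw [hpz i hi, zero_mul, Real.sqrt_zero]
      · intro h; exact absurd (Finset.mem_univ k) h
  · have hc : 0 < 1 - p k := lt_of_le_of_ne (by linarith) (fun h => hpk (by linarith))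
    set c : ℝ := 2 * (1 - p k) with hcdef
    have hcpos : 0 < c := mul_pos two_pos hc
    refine ⟨fun i => if i = k then 1/2 else p i / c, ?_, ?_, ?_, ?_⟩
    · intro i; dsimp only; split
      · norm_num
      · exact div_nonneg (hp0 i) hcpos.le
    · rw [← Finset.add_sum_erase _ _ (Finset.mem_univ k), if_pos rfl]
      have : ∑ i ∈ univ.erase k, (if i = k then (1:ℝ)/2 else p i / c)
          = ∑ i ∈ univ.erase k, p i / c :=
        Finset.sum_congr rfl fun i hi => if_neg (Finset.ne_of_mem_erase hi)
      rw [this, ← Finset.sum_div]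
      have hSp : ∑ i ∈ univ.erase k, p i = 1 - p k := by
        have := Finset.sum_erase_add univ p (Finset.mem_univ k); linarith
      rw [hSp, hcdef]
      field_simp
      ring
    · intro i; dsimp only; split
      · exact le_rfl
      · next hi =>
        rw [div_le_iff₀ hcpos, hcdef]
        have := hple i hi
        linarith
    · dsimp only
      rw [← Finset.add_sum_erase _ _ (Finset.mem_univ k), if_pos rfl]
      have h1 : ∑ i ∈ univ.erase k, Real.sqrt (p i * if i = k then 1/2 else p i / c)
          = ∑ i ∈ univ.erase k, p i / Real.sqrt c := by
        refine Finset.sum_congr rfl fun i hi => ?_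
        rw [if_neg (Finset.ne_of_mem_erase hi)]
        rw [show p i * (p i / c) = p i ^ 2 / c by ring, Real.sqrt_div (by positivity),
          Real.sqrt_sq (hp0 i)]
      rw [h1, ← Finset.sum_div]
      have hSp : ∑ i ∈ univ.erase k, p i = 1 - p k := by
        have := Finset.sum_erase_add univ p (Finset.mem_univ k); linarith
      rw [hSp, hcdef]
      rw [Real.sqrt_mul (by norm_num : (0:ℝ) ≤ 2),
        show p k * (1/2) = p k / 2 by ring, Real.sqrt_div (hp0 k)]
      rw [mul_comm (Real.sqrt 2), ← div_div, Real.div_sqrt, add_div]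

open BigOperators

theorem stmt15 (n : ℕ) (hn : 2 ≤ n) (p : Fin n → ℝ)
    (hp0 : ∀ i, 0 ≤ p i) (hp1 : ∑ i, p i = 1) (k : Fin n) (hk : 1/2 < p k) :
    IsGreatest {f : ℝ | ∃ q : Fin n → ℝ, (∀ i, 0 ≤ q i) ∧ (∑ i, q i = 1) ∧
        (∀ i, q i ≤ 1/2) ∧ f = ∑ i, Real.sqrt (p i * q i)}
      ((Real.sqrt (p k) + Real.sqrt (1 - p k)) / Real.sqrt 2) ∧
    IsLeast {d : ℝ | ∃ q : Fin n → ℝ, (∀ i, 0 ≤ q i) ∧ (∑ i, q i = 1) ∧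
        (∀ i, q i ≤ 1/2) ∧ d = 1 - (∑ i, Real.sqrt (p i * q i)) ^ 2}
      (1/2 - Real.sqrt (p k * (1 - p k))) ∧
    IsLeast {d : ℝ | ∃ q : Fin n → ℝ, (∀ i, 0 ≤ q i) ∧ (∑ i, q i = 1) ∧
        (∀ i, q i ≤ 1/2) ∧ d = 2 * (1 - ∑ i, Real.sqrt (p i * q i))}
      (2 - Real.sqrt 2 * (Real.sqrt (p k) + Real.sqrt (1 - p k))) := by
  have hpk1 : p k ≤ 1 := by
    have := Finset.single_le_sum (fun i _ => hp0 i) (Finset.mem_univ k)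
    linarith
  set F : ℝ := (Real.sqrt (p k) + Real.sqrt (1 - p k)) / Real.sqrt 2 with hFdef
  have h2 : (Real.sqrt 2)^2 = 2 := Real.sq_sqrt (by norm_num)
  have hs2ne : Real.sqrt 2 ≠ 0 := by positivity
  have ha2 : Real.sqrt (p k)^2 = p k := Real.sq_sqrt (hp0 k)
  have hb2 : Real.sqrt (1 - p k)^2 = 1 - p k := Real.sq_sqrt (by linarith)
  have habm : Real.sqrt (p k) * Real.sqrt (1 - p k) = Real.sqrt (p k * (1 - p k)) :=
    (Real.sqrt_mul (hp0 k) _).symm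
  have hF2 : F^2 = 1/2 + Real.sqrt (p k * (1 - p k)) := by
    rw [hFdef, div_pow, h2]
    linear_combination (1/2) * ha2 + (1/2) * hb2 + habm
  have h2F : 2 * F = Real.sqrt 2 * (Real.sqrt (p k) + Real.sqrt (1 - p k)) := by
    have hm : Real.sqrt 2 * F = Real.sqrt (p k) + Real.sqrt (1 - p k) := by
      rw [hFdef, mul_div_cancel₀ _ hs2ne]
    calc 2 * F = (Real.sqrt 2 * Real.sqrt 2) * F := by
          rw [Real.mul_self_sqrt (by norm_num : (0:ℝ) ≤ 2)]
      _ = Real.sqrt 2 * (Real.sqrt 2 * F) := by ring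
      _ = _ := by rw [hm]
  obtain ⟨q, hq0, hq1, hq2, hqval⟩ := witness hn p hp0 hp1 k hk
  have hub : ∀ r : Fin n → ℝ, (∀ i, 0 ≤ r i) → (∑ i, r i = 1) → (∀ i, r i ≤ 1/2) →
      ∑ i, Real.sqrt (p i * r i) ≤ F :=
    fun r h0 h1 h2' => upper_bound p r hp0 hp1 k hk h0 h1 h2'
  have hSnn : ∀ r : Fin n → ℝ, (0:ℝ) ≤ ∑ i, Real.sqrt (p i * r i) :=
    fun r => Finset.sum_nonneg fun i _ => Real.sqrt_nonneg _
  refine ⟨⟨⟨q, hq0, hq1, hq2, hqval.symm⟩, ?_⟩, ⟨⟨q, hq0, hq1, hq2, ?_⟩, ?_⟩,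
    ⟨⟨q, hq0, hq1, hq2, ?_⟩, ?_⟩⟩
  · rintro f ⟨r, h0, h1, h2', rfl⟩
    exact hub r h0 h1 h2'
  · rw [hqval, hF2]; ring
  · rintro d ⟨r, h0, h1, h2', rfl⟩
    have hle := hub r h0 h1 h2'
    have hnn := hSnn r
    have : (∑ i, Real.sqrt (p i * r i))^2 ≤ F^2 := by nlinarith
    rw [hF2] at this
    linarith
  · rw [hqval]; linarith [h2F]
  · rintro d ⟨r, h0, h1, h2', rfl⟩
    have hle := hub r h0 h1 h2'
    linarith [h2F]
end

section
/- Let N ≥ 2 be an even integer and let D be a real-valued function on pairs of 2^N × 2^N complex matrices that is contractive under quantum channels and jointly convex. Then for all p, q, p', q' ∈ [0,1] with p + q ≤ 1 and p' + q' ≤ 1, and all h, h' ∈ [0,1) with h ≤ h': D(ω(p,q,h), ω(p,q,0)) ≤ D(ω(p',q',h'), ω(p',q',0)). In particular, for fixed h the quantity D(ω(p,q,h), ω(p,q,0)) does not depend on (p,q), and it is monotonically nondecreasing in h. -/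
open Matrix BigOperators Polynomial
open scoped ComplexOrder

/-- A quantum channel on `2^N × 2^N` complex matrices: a map admitting a Kraus
representation `Φ(ρ) = Σᵢ Aᵢ ρ Aᵢ†` with `Σᵢ Aᵢ† Aᵢ = I`. -/
def IsQuantumChannel (N : ℕ)
    (Φ : Matrix (Fin N → Fin 2) (Fin N → Fin 2) ℂ → Matrix (Fin N → Fin 2) (Fin N → Fin 2) ℂ) :
    Prop :=
  ∃ (m : ℕ) (A : Fin m → Matrix (Fin N → Fin 2) (Fin N → Fin 2) ℂ),
    (∑ i, (A i)ᴴ * A i = 1) ∧ ∀ ρ, Φ ρ = ∑ i, A i * ρ * (A i)ᴴ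

/-- `D` is contractive under quantum channels. -/
def Contractive (N : ℕ)
    (D : Matrix (Fin N → Fin 2) (Fin N → Fin 2) ℂ → Matrix (Fin N → Fin 2) (Fin N → Fin 2) ℂ → ℝ) :
    Prop :=
  ∀ Φ, IsQuantumChannel N Φ →
    ∀ ρ σ : Matrix (Fin N → Fin 2) (Fin N → Fin 2) ℂ, D (Φ ρ) (Φ σ) ≤ D ρ σ

/-- The `M³_N` state `ω(p,q,h)` with correlation triple
`p·V₁(h) + q·V₂(h) + (1−p−q)·V₃(h)`, where `V₁(h) = (−h, (−1)^{N/2} h, −1)`,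
`V₂(h) = (−h, (−1)^{N/2}, −h)`, `V₃(h) = (−1, (−1)^{N/2} h, −h)`. -/
noncomputable def omegaState (N : ℕ) (p q h : ℝ) :
    Matrix (Fin N → Fin 2) (Fin N → Fin 2) ℂ :=
  Mstate N (p • ![-h, (-1:ℝ)^(N/2) * h, -1] + q • ![-h, (-1:ℝ)^(N/2), -h]
    + (1 - p - q) • ![(-1:ℝ), (-1:ℝ)^(N/2) * h, -h])

/-- `D` is jointly convex. -/
def JointlyConvex (N : ℕ)
    (D : Matrix (Fin N → Fin 2) (Fin N → Fin 2) ℂ → Matrix (Fin N → Fin 2) (Fin N → Fin 2) ℂ → ℝ) :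
    Prop :=
  ∀ l : ℝ, l ∈ Set.Icc (0:ℝ) 1 →
    ∀ ρ ρ' σ σ' : Matrix (Fin N → Fin 2) (Fin N → Fin 2) ℂ,
      D (l • ρ + (1 - l) • ρ') (l • σ + (1 - l) • σ') ≤ l * D ρ σ + (1 - l) * D ρ' σ'

/-! ### Auxiliary development -/
set_option maxHeartbeats 1000000

noncomputable def kronFam (N : ℕ) (M : Fin N → Matrix (Fin 2) (Fin 2) ℂ) :
    Matrix (Fin N → Fin 2) (Fin N → Fin 2) ℂ :=
  Matrix.of fun i j => ∏ k, M k (i k) (j k)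

lemma kronPow_eq_kronFam (A : Matrix (Fin 2) (Fin 2) ℂ) (N : ℕ) :
    kronPow A N = kronFam N (fun _ => A) := rfl

lemma kronFam_mul (N : ℕ) (M M' : Fin N → Matrix (Fin 2) (Fin 2) ℂ) :
    kronFam N M * kronFam N M' = kronFam N (fun k => M k * M' k) := by
  ext i j
  simp only [kronFam, Matrix.mul_apply, Matrix.of_apply]
  rw [Finset.prod_univ_sum (fun _ => (Finset.univ : Finset (Fin 2)))
    (fun t m => M t (i t) m * M' t m (j t))]
  rw [Fintype.piFinset_univ]
  exact Finset.sum_congr rfl fun k _ => (Finset.prod_mul_distrib).symm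

lemma kronFam_one (N : ℕ) : kronFam N (fun _ => 1) = 1 := by
  ext i j
  simp only [kronFam, Matrix.of_apply, Matrix.one_apply, Finset.prod_boole]
  by_cases hij : i = j
  · simp [hij]
  · rw [if_neg, if_neg hij]
    intro hall
    exact hij (funext fun k => hall k (Finset.mem_univ k))

lemma kronFam_conjTranspose (N : ℕ) (M : Fin N → Matrix (Fin 2) (Fin 2) ℂ) :
    (kronFam N M)ᴴ = kronFam N (fun k => (M k)ᴴ) := by
  ext i j
  simp only [kronFam, Matrix.conjTranspose_apply, Matrix.of_apply]
  exact map_prod (starRingEnd ℂ) _ _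

lemma kronFam_smul (N : ℕ) (c : ℂ) (M : Fin N → Matrix (Fin 2) (Fin 2) ℂ) :
    kronFam N (fun k => c • M k) = c ^ N • kronFam N M := by
  ext i j
  simp only [kronFam, Matrix.of_apply, Matrix.smul_apply, smul_eq_mul]
  rw [Finset.prod_mul_distrib, Finset.prod_const]
  simp

lemma kronFam_if_neg (N : ℕ) (hN : 0 < N) (A : Matrix (Fin 2) (Fin 2) ℂ)
    (M : Fin N → Matrix (Fin 2) (Fin 2) ℂ) :
    kronFam N (fun t => if (t : ℕ) = 0 then -A else M t)
      = - kronFam N (fun t => if (t : ℕ) = 0 then A else M t) := by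
  ext i j
  simp only [kronFam, Matrix.of_apply, Matrix.neg_apply]
  have h0 : (⟨0, hN⟩ : Fin N) ∈ Finset.univ := Finset.mem_univ _
  rw [← Finset.mul_prod_erase _ _ h0, ← Finset.mul_prod_erase _ _ h0]
  have he : ∀ t ∈ Finset.univ.erase (⟨0, hN⟩ : Fin N),
      (if (t : ℕ) = 0 then -A else M t) (i t) (j t)
        = (if (t : ℕ) = 0 then A else M t) (i t) (j t) := by
    intro t ht
    have : (t : ℕ) ≠ 0 := fun h => (Finset.mem_erase.mp ht).1 (Fin.ext h)
    simp [this]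
  rw [Finset.prod_congr rfl he]
  simp [neg_mul]

lemma pauli_sq (k : Fin 3) : pauli k * pauli k = 1 := by
  fin_cases k <;>
  · ext i j
    fin_cases i <;> fin_cases j <;>
      simp [pauli, Matrix.mul_apply, Fin.sum_univ_two, Matrix.one_apply, Complex.ext_iff]

lemma pauli_anti (k k' : Fin 3) (hkk : k ≠ k') : pauli k * pauli k' = -(pauli k' * pauli k) := by
  fin_cases k <;> fin_cases k' <;> first
  | exact absurd rfl hkk
  | · ext i j
      fin_cases i <;> fin_cases j <;>
        simp [pauli, Matrix.mul_apply, Fin.sum_univ_two, Complex.ext_iff]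

lemma pauli_mul01 : pauli 0 * pauli 1 = Complex.I • pauli 2 := by
  ext i j
  fin_cases i <;> fin_cases j <;>
    simp [pauli, Matrix.mul_apply, Fin.sum_univ_two, Complex.ext_iff]

lemma pauli_herm (k : Fin 3) : (pauli k)ᴴ = pauli k := by
  fin_cases k <;>
  · ext i j
    fin_cases i <;> fin_cases j <;>
      simp [pauli, Matrix.conjTranspose_apply, Complex.ext_iff]

noncomputable def Kp (N : ℕ) (k : Fin 3) := kronFam N (fun _ => pauli k)
noncomputable def sN (N : ℕ) : ℂ := (((-1 : ℝ) ^ (N / 2) : ℝ) : ℂ)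
noncomputable def Tp (N : ℕ) := sN N • Kp N 1
noncomputable def Emb (N : ℕ) (k : Fin 3) :=
  kronFam N (fun t => if (t : ℕ) = 0 then pauli k else 1)

lemma Kp_sq (N : ℕ) (k : Fin 3) : Kp N k * Kp N k = 1 := by
  rw [Kp, kronFam_mul]
  rw [show (fun t : Fin N => pauli k * pauli k) = (fun _ => 1) from funext fun _ => pauli_sq k]
  exact kronFam_one N

lemma Kp_herm (N : ℕ) (k : Fin 3) : (Kp N k)ᴴ = Kp N k := by
  rw [Kp, kronFam_conjTranspose]
  exact congrArg _ (funext fun _ => pauli_herm k)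

lemma sN_mul_sN (N : ℕ) : sN N * sN N = 1 := by
  rw [sN, ← Complex.ofReal_mul, ← pow_add]
  norm_num [pow_mul_comm, ← two_mul, pow_mul]

lemma sN_conj (N : ℕ) : star (sN N) = sN N := Complex.conj_ofReal _

lemma IN_eq (N : ℕ) (hN : Even N) : Complex.I ^ N = sN N := by
  obtain ⟨m, hm⟩ := hN
  have h1 : sN N = (-1 : ℂ) ^ m := by
    rw [sN]
    push_cast
    congr 1
    omega
  rw [h1, hm, pow_add, ← mul_pow, Complex.I_mul_I]

lemma Kp_comm01 (N : ℕ) (hN : Even N) : Kp N 1 * Kp N 0 = Kp N 0 * Kp N 1 := by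
  rw [Kp, Kp, kronFam_mul, kronFam_mul]
  rw [show (fun t : Fin N => pauli 1 * pauli 0)
      = (fun _ : Fin N => (-1 : ℂ) • (pauli 0 * pauli 1)) from
    funext fun _ => by rw [pauli_anti 1 0 (by decide)]; simp]
  rw [kronFam_smul]
  rw [hN.neg_one_pow, one_smul]

lemma ST_eq (N : ℕ) (hN : Even N) : Kp N 0 * Tp N = Kp N 2 := by
  rw [Tp, mul_smul_comm, Kp, Kp, kronFam_mul]
  rw [show (fun t : Fin N => pauli 0 * pauli 1) = (fun _ : Fin N => Complex.I • pauli 2) from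
    funext fun _ => pauli_mul01]
  rw [kronFam_smul, smul_smul, IN_eq N hN, sN_mul_sN, one_smul]
  rfl

lemma Tp_sq (N : ℕ) (hN : Even N) : Tp N * Tp N = 1 := by
  rw [Tp, smul_mul_assoc, mul_smul_comm, smul_smul, sN_mul_sN, one_smul, Kp_sq]

lemma Tp_comm_S (N : ℕ) (hN : Even N) : Tp N * Kp N 0 = Kp N 0 * Tp N := by
  rw [Tp, smul_mul_assoc, mul_smul_comm, Kp_comm01 N hN]

lemma Tp_herm (N : ℕ) : (Tp N)ᴴ = Tp N := by
  rw [Tp, Matrix.conjTranspose_smul, sN_conj, Kp_herm]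

lemma Kp1_eq (N : ℕ) : Kp N 1 = sN N • Tp N := by
  rw [Tp, smul_smul, sN_mul_sN, one_smul]

lemma Emb_sq (N : ℕ) (k : Fin 3) : Emb N k * Emb N k = 1 := by
  rw [Emb, kronFam_mul, ← kronFam_one N]
  refine congrArg _ (funext fun t => ?_)
  split_ifs with ht
  · exact pauli_sq k
  · exact one_mul 1

lemma Emb_herm (N : ℕ) (k : Fin 3) : (Emb N k)ᴴ = Emb N k := by
  rw [Emb, kronFam_conjTranspose]
  refine congrArg _ (funext fun t => ?_)
  split_ifs with ht
  · exact pauli_herm k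
  · exact Matrix.conjTranspose_one

lemma Emb_mul_Kp (N : ℕ) (k k' : Fin 3) : Emb N k * Kp N k'
    = kronFam N (fun t => if (t : ℕ) = 0 then pauli k * pauli k' else pauli k') := by
  rw [Emb, Kp, kronFam_mul]
  refine congrArg _ (funext fun t => ?_)
  split_ifs with ht <;> simp

lemma Kp_mul_Emb (N : ℕ) (k k' : Fin 3) : Kp N k' * Emb N k
    = kronFam N (fun t => if (t : ℕ) = 0 then pauli k' * pauli k else pauli k') := by
  rw [Emb, Kp, kronFam_mul]
  refine congrArg _ (funext fun t => ?_)
  split_ifs with ht <;> simp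

lemma Emb_comm_Kp (N : ℕ) (k k' : Fin 3) (hkk : k = k') :
    Emb N k * Kp N k' = Kp N k' * Emb N k := by
  rw [Emb_mul_Kp, Kp_mul_Emb, hkk]

lemma Emb_anticomm_Kp (N : ℕ) (hN : 0 < N) (k k' : Fin 3) (hkk : k ≠ k') :
    Emb N k * Kp N k' = -(Kp N k' * Emb N k) := by
  rw [Emb_mul_Kp, Kp_mul_Emb]
  rw [show (fun t : Fin N => if (t : ℕ) = 0 then pauli k * pauli k' else pauli k')
      = (fun t : Fin N => if (t : ℕ) = 0 then -(pauli k' * pauli k) else pauli k') from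
    funext fun t => by rw [pauli_anti k k' hkk]]
  exact kronFam_if_neg N hN _ _

lemma Emb_comm_Tp (N : ℕ) (k : Fin 3) (hk : k = 1) : Emb N k * Tp N = Tp N * Emb N k := by
  rw [Tp, mul_smul_comm, smul_mul_assoc, Emb_comm_Kp N k 1 hk]

lemma Emb_anticomm_Tp (N : ℕ) (hN : 0 < N) (k : Fin 3) (hk : k ≠ 1) :
    Emb N k * Tp N = -(Tp N * Emb N k) := by
  rw [Tp, mul_smul_comm, smul_mul_assoc, Emb_anticomm_Kp N hN k 1 hk, smul_neg]

def sg (b : Bool) : ℂ := if b then -1 else 1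

@[simp] lemma sg_false : sg false = 1 := rfl
@[simp] lemma sg_true : sg true = -1 := rfl
lemma sg_conj (b : Bool) : star (sg b) = sg b := by cases b <;> simp [sg]
lemma sg_not (b : Bool) : sg (!b) = -sg b := by cases b <;> simp [sg]

noncomputable def Pm (N : ℕ) (ε : Bool) :=
  (2:ℂ)⁻¹ • ((1 : Matrix (Fin N → Fin 2) (Fin N → Fin 2) ℂ) + sg ε • Kp N 0)
noncomputable def Qm (N : ℕ) (δ : Bool) :=
  (2:ℂ)⁻¹ • ((1 : Matrix (Fin N → Fin 2) (Fin N → Fin 2) ℂ) + sg δ • Tp N)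
noncomputable def Pi4 (N : ℕ) (a : Bool × Bool) := Pm N a.1 * Qm N a.2

lemma proj_mul_proj {d : Type*} [Fintype d] [DecidableEq d] (G : Matrix d d ℂ)
    (hG : G * G = 1) (c c' : ℂ) :
    ((2:ℂ)⁻¹ • ((1 : Matrix d d ℂ) + c • G)) * ((2:ℂ)⁻¹ • (1 + c' • G))
      = (4:ℂ)⁻¹ • ((1 + c * c') • (1 : Matrix d d ℂ) + (c + c') • G) := by
  simp only [Matrix.mul_smul, Matrix.smul_mul, mul_add, add_mul, one_mul, mul_one,
    smul_smul, smul_add, hG]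
  module

lemma Pm_mul_Pm (N : ℕ) (ε ε' : Bool) : Pm N ε * Pm N ε' = if ε = ε' then Pm N ε else 0 := by
  rw [Pm, Pm, proj_mul_proj _ (Kp_sq N 0)]
  cases ε <;> cases ε' <;> simp [Pm] <;> module

lemma Qm_mul_Qm (N : ℕ) (hN : Even N) (δ δ' : Bool) :
    Qm N δ * Qm N δ' = if δ = δ' then Qm N δ else 0 := by
  rw [Qm, Qm, proj_mul_proj _ (Tp_sq N hN)]
  cases δ <;> cases δ' <;> simp [Qm] <;> module

lemma Qm_comm_Pm (N : ℕ) (hN : Even N) (ε δ : Bool) : Qm N δ * Pm N ε = Pm N ε * Qm N δ := by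
  simp only [Pm, Qm, Matrix.mul_smul, Matrix.smul_mul, mul_add, add_mul, one_mul, mul_one,
    smul_smul, smul_add, Tp_comm_S N hN]
  module

lemma Pi4_mul_Pi4 (N : ℕ) (hN : Even N) (a b : Bool × Bool) :
    Pi4 N a * Pi4 N b = if a = b then Pi4 N a else 0 := by
  obtain ⟨a1, a2⟩ := a
  obtain ⟨b1, b2⟩ := b
  rw [Pi4, Pi4]
  have : Pm N a1 * Qm N a2 * (Pm N b1 * Qm N b2)
      = (Pm N a1 * Pm N b1) * (Qm N a2 * Qm N b2) := by
    rw [Matrix.mul_assoc, Matrix.mul_assoc, ← Matrix.mul_assoc (Qm N a2),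
      Qm_comm_Pm N hN, Matrix.mul_assoc]
  rw [this, Pm_mul_Pm, Qm_mul_Qm N hN]
  by_cases h1 : a1 = b1 <;> by_cases h2 : a2 = b2 <;>
    simp [h1, h2, Prod.ext_iff, Pi4]

lemma Pm_herm (N : ℕ) (ε : Bool) : (Pm N ε)ᴴ = Pm N ε := by
  rw [Pm, Matrix.conjTranspose_smul, Matrix.conjTranspose_add, Matrix.conjTranspose_smul,
    Matrix.conjTranspose_one, Kp_herm, sg_conj]
  norm_num

lemma Qm_herm (N : ℕ) (δ : Bool) : (Qm N δ)ᴴ = Qm N δ := by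
  rw [Qm, Matrix.conjTranspose_smul, Matrix.conjTranspose_add, Matrix.conjTranspose_smul,
    Matrix.conjTranspose_one, Tp_herm, sg_conj]
  norm_num

lemma Pi4_herm (N : ℕ) (hN : Even N) (a : Bool × Bool) : (Pi4 N a)ᴴ = Pi4 N a := by
  rw [Pi4, Matrix.conjTranspose_mul, Qm_herm, Pm_herm, Qm_comm_Pm N hN]

lemma sum_Pi4 (N : ℕ) : ∑ a : Bool × Bool, Pi4 N a = 1 := by
  rw [Fintype.sum_prod_type]
  simp only [Fintype.sum_bool]
  simp only [Pi4, Pm, Qm, Matrix.mul_smul, Matrix.smul_mul, mul_add, add_mul, one_mul,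
    mul_one, smul_smul, smul_add, sg_true, sg_false]
  module

lemma Pi4_expand (N : ℕ) (ε δ : Bool) :
    Pi4 N (ε, δ) = (4:ℂ)⁻¹ • ((1 : Matrix (Fin N → Fin 2) (Fin N → Fin 2) ℂ)
      + sg ε • Kp N 0 + sg δ • Tp N + (sg ε * sg δ) • (Kp N 0 * Tp N)) := by
  simp only [Pi4, Pm, Qm, Matrix.mul_smul, Matrix.smul_mul, mul_add, add_mul, one_mul,
    mul_one, smul_smul, smul_add]
  module

lemma conj_comm_form {d : Type*} [Fintype d] [DecidableEq d]
    (F G : Matrix d d ℂ) (hF2 : F * F = 1) (hc : F * G = G * F) (c : ℂ) :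
    F * ((2:ℂ)⁻¹ • ((1 : Matrix d d ℂ) + c • G)) * F = (2:ℂ)⁻¹ • (1 + c • G) := by
  have h1 : F * (G * F) = G := by
    rw [← Matrix.mul_assoc, hc, Matrix.mul_assoc, hF2, mul_one]
  simp only [Matrix.mul_smul, Matrix.smul_mul, mul_add, add_mul, one_mul, mul_one,
    smul_add, smul_smul, Matrix.mul_assoc, h1, hF2]

lemma conj_anti_form {d : Type*} [Fintype d] [DecidableEq d]
    (F G : Matrix d d ℂ) (hF2 : F * F = 1) (hc : F * G = -(G * F)) (c : ℂ) :
    F * ((2:ℂ)⁻¹ • ((1 : Matrix d d ℂ) + c • G)) * F = (2:ℂ)⁻¹ • (1 + (-c) • G) := by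
  have h1 : F * (G * F) = -G := by
    rw [← Matrix.mul_assoc, hc, neg_mul, Matrix.mul_assoc, hF2, mul_one]
  simp only [Matrix.mul_smul, Matrix.smul_mul, mul_add, add_mul, one_mul, mul_one,
    smul_add, smul_smul, Matrix.mul_assoc, h1, hF2]
  module

lemma conj_mul_split {d : Type*} [Fintype d] [DecidableEq d]
    (F X Y : Matrix d d ℂ) (hF2 : F * F = 1) :
    F * (X * Y) * F = (F * X * F) * (F * Y * F) := by
  have h : F * X * F * (F * Y * F) = F * X * ((F * F) * (Y * F)) := by
    simp only [Matrix.mul_assoc]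
  rw [h, hF2, one_mul, ← Matrix.mul_assoc, ← Matrix.mul_assoc]

noncomputable def flip4 (N : ℕ) (a b : Bool × Bool) :
    Matrix (Fin N → Fin 2) (Fin N → Fin 2) ℂ :=
  if a.1 = b.1 then (if a.2 = b.2 then 1 else Emb N 0)
  else (if a.2 = b.2 then Emb N 1 else Emb N 2)

lemma flip4_sq (N : ℕ) (a b : Bool × Bool) : flip4 N a b * flip4 N a b = 1 := by
  rw [flip4]
  split_ifs <;> first | exact one_mul 1 | exact Emb_sq N _

lemma flip4_herm (N : ℕ) (a b : Bool × Bool) : (flip4 N a b)ᴴ = flip4 N a b := by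
  rw [flip4]
  split_ifs <;> first | exact Matrix.conjTranspose_one | exact Emb_herm N _

lemma bool_ne_iff {a b : Bool} (h : ¬ a = b) : b = !a := by
  cases a <;> cases b <;> simp_all

lemma flip4_Pm (N : ℕ) (h0 : 0 < N) (a b : Bool × Bool) :
    flip4 N a b * Pm N a.1 * flip4 N a b = Pm N b.1 := by
  rw [flip4, Pm]
  split_ifs with h1 h2 h2
  · rw [mul_one, one_mul, h1, Pm]
  · rw [conj_comm_form _ _ (Emb_sq N 0) (Emb_comm_Kp N 0 0 rfl), h1, Pm]
  · rw [conj_anti_form _ _ (Emb_sq N 1) (Emb_anticomm_Kp N h0 1 0 (by decide)),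
      bool_ne_iff h1, Pm, sg_not]
  · rw [conj_anti_form _ _ (Emb_sq N 2) (Emb_anticomm_Kp N h0 2 0 (by decide)),
      bool_ne_iff h1, Pm, sg_not]

lemma flip4_Qm (N : ℕ) (h0 : 0 < N) (a b : Bool × Bool) :
    flip4 N a b * Qm N a.2 * flip4 N a b = Qm N b.2 := by
  rw [flip4, Qm]
  split_ifs with h1 h2 h2
  · rw [mul_one, one_mul, h2, Qm]
  · rw [conj_anti_form _ _ (Emb_sq N 0) (Emb_anticomm_Tp N h0 0 (by decide)),
      bool_ne_iff h2, Qm, sg_not]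
  · rw [conj_comm_form _ _ (Emb_sq N 1) (Emb_comm_Tp N 1 rfl), h2, Qm]
  · rw [conj_anti_form _ _ (Emb_sq N 2) (Emb_anticomm_Tp N h0 2 (by decide)),
      bool_ne_iff h2, Qm, sg_not]

lemma flip4_conj (N : ℕ) (h0 : 0 < N) (a b : Bool × Bool) :
    flip4 N a b * Pi4 N a * flip4 N a b = Pi4 N b := by
  rw [Pi4, conj_mul_split _ _ _ (flip4_sq N a b), flip4_Pm N h0 a b, flip4_Qm N h0 a b, Pi4]

noncomputable def stateOf (N : ℕ) (v : Bool × Bool → ℂ) :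
    Matrix (Fin N → Fin 2) (Fin N → Fin 2) ℂ :=
  ((2:ℂ) ^ N)⁻¹ • ∑ a : Bool × Bool, v a • Pi4 N a

noncomputable def nuW (p q h : ℝ) : Bool × Bool → ℂ := fun a =>
  match a with
  | (false, false) => 2 * (q:ℂ) * (1 - (h:ℂ))
  | (false, true) => 2 * (p:ℂ) * (1 - (h:ℂ))
  | (true, false) => 2 * (1 + (h:ℂ))
  | (true, true) => 2 * (1 - (p:ℂ) - (q:ℂ)) * (1 - (h:ℂ))

lemma comb_expand (N : ℕ) (x y z : ℂ) :
    (1 : Matrix (Fin N → Fin 2) (Fin N → Fin 2) ℂ) + x • Kp N 0 + y • Tp N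
      + z • (Kp N 0 * Tp N)
    = ∑ a : Bool × Bool,
        (1 + sg a.1 * x + sg a.2 * y + sg a.1 * sg a.2 * z) • Pi4 N a := by
  rw [Fintype.sum_prod_type]
  simp only [Fintype.sum_bool]
  simp only [Pi4_expand, sg_true, sg_false]
  module

lemma omega_expand (N : ℕ) (hN : Even N) (p q h : ℝ) :
    omegaState N p q h = stateOf N (nuW p q h) := by
  rw [omegaState, Mstate, Fin.sum_univ_three, kronPow_eq_kronFam, kronPow_eq_kronFam,
    kronPow_eq_kronFam, stateOf]
  congr 1
  simp only [Pi.add_apply, Pi.smul_apply, smul_eq_mul, Matrix.cons_val_zero,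
    Matrix.cons_val_one, Matrix.head_cons, Matrix.cons_val_two, Matrix.tail_cons]
  have e1 : ((p * ((-1:ℝ) ^ (N / 2) * h) + q * (-1:ℝ) ^ (N / 2)
      + (1 - p - q) * ((-1:ℝ) ^ (N / 2) * h) : ℝ) : ℂ)
      = sN N * ((p:ℂ) * h + q + (1 - p - q) * h) := by
    rw [sN]
    push_cast
    ring
  rw [show kronFam N (fun _ => pauli 1) = Kp N 1 from rfl,
    show kronFam N (fun _ => pauli 0) = Kp N 0 from rfl,
    show kronFam N (fun _ => pauli 2) = Kp N 2 from rfl]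
  rw [e1, Kp1_eq, smul_smul, mul_comm (sN N), mul_assoc, sN_mul_sN, mul_one]
  rw [← ST_eq N hN]
  simp only [← add_assoc]
  rw [comb_expand N]
  refine Finset.sum_congr rfl fun a _ => ?_
  obtain ⟨ε, δ⟩ := a
  cases ε <;> cases δ <;>
  · simp only [nuW, sg_true, sg_false]
    push_cast
    ring_nf

noncomputable def KrF (N : ℕ) (w : Fin 3 → ℝ) (g : Fin 3 → Bool × Bool → Bool × Bool)
    (x : Fin 3 × (Bool × Bool)) : Matrix (Fin N → Fin 2) (Fin N → Fin 2) ℂ :=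
  (Real.sqrt (w x.1) : ℂ) • (flip4 N x.2 (g x.1 x.2) * Pi4 N x.2)

noncomputable def chanMap (N : ℕ) (w : Fin 3 → ℝ) (g : Fin 3 → Bool × Bool → Bool × Bool)
    (ρ : Matrix (Fin N → Fin 2) (Fin N → Fin 2) ℂ) :
    Matrix (Fin N → Fin 2) (Fin N → Fin 2) ℂ :=
  ∑ x : Fin 3 × (Bool × Bool), KrF N w g x * ρ * (KrF N w g x)ᴴ

lemma KrF_herm_mul (N : ℕ) (hN : Even N) (h0 : 0 < N) (w : Fin 3 → ℝ)
    (g : Fin 3 → Bool × Bool → Bool × Bool) (hw : ∀ t, 0 ≤ w t) (x : Fin 3 × (Bool × Bool)) :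
    (KrF N w g x)ᴴ * KrF N w g x = (w x.1 : ℂ) • Pi4 N x.2 := by
  rw [KrF, Matrix.conjTranspose_smul, Matrix.conjTranspose_mul, Pi4_herm N hN, flip4_herm,
    Matrix.smul_mul, Matrix.mul_smul, smul_smul]
  have hc : star ((Real.sqrt (w x.1) : ℂ)) * (Real.sqrt (w x.1) : ℂ) = (w x.1 : ℂ) := by
    rw [Complex.star_def, Complex.conj_ofReal, ← Complex.ofReal_mul, Real.mul_self_sqrt (hw x.1)]
  rw [hc]
  congr 1
  rw [show Pi4 N x.2 * flip4 N x.2 (g x.1 x.2) * (flip4 N x.2 (g x.1 x.2) * Pi4 N x.2)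
      = Pi4 N x.2 * (flip4 N x.2 (g x.1 x.2) * flip4 N x.2 (g x.1 x.2)) * Pi4 N x.2 by
    simp only [Matrix.mul_assoc]]
  rw [flip4_sq, mul_one]
  rw [show Pi4 N x.2 * Pi4 N x.2 = if x.2 = x.2 then Pi4 N x.2 else 0 from
    Pi4_mul_Pi4 N hN _ _, if_pos rfl]

lemma chan_channel (N : ℕ) (hN : Even N) (h0 : 0 < N) (w : Fin 3 → ℝ)
    (g : Fin 3 → Bool × Bool → Bool × Bool) (hw : ∀ t, 0 ≤ w t) (hw1 : ∑ t, w t = 1) :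
    IsQuantumChannel N (chanMap N w g) := by
  refine ⟨Fintype.card (Fin 3 × (Bool × Bool)),
    fun i => KrF N w g ((Fintype.equivFin (Fin 3 × (Bool × Bool))).symm i), ?_, ?_⟩
  · rw [(Fintype.equivFin (Fin 3 × (Bool × Bool))).symm.sum_comp
      (fun x => (KrF N w g x)ᴴ * KrF N w g x)]
    have : ∀ x : Fin 3 × (Bool × Bool),
        (KrF N w g x)ᴴ * KrF N w g x = (w x.1 : ℂ) • Pi4 N x.2 :=
      KrF_herm_mul N hN h0 w g hw
    rw [Finset.sum_congr rfl fun x _ => this x]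
    rw [Fintype.sum_prod_type]
    have : ∀ t : Fin 3, ∑ a : Bool × Bool, (w t : ℂ) • Pi4 N a
        = (w t : ℂ) • (1 : Matrix (Fin N → Fin 2) (Fin N → Fin 2) ℂ) := by
      intro t
      rw [← Finset.smul_sum, sum_Pi4]
    rw [Finset.sum_congr rfl fun t _ => this t, ← Finset.sum_smul]
    have : (∑ t : Fin 3, (w t : ℂ)) = 1 := by
      rw [← Complex.ofReal_sum, hw1, Complex.ofReal_one]
    rw [this, one_smul]
  · intro ρ
    rw [(Fintype.equivFin (Fin 3 × (Bool × Bool))).symm.sum_comp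
      (fun x => KrF N w g x * ρ * (KrF N w g x)ᴴ)]
    rfl

lemma KrF_action (N : ℕ) (hN : Even N) (h0 : 0 < N) (w : Fin 3 → ℝ)
    (g : Fin 3 → Bool × Bool → Bool × Bool) (hw : ∀ t, 0 ≤ w t) (v : Bool × Bool → ℂ)
    (x : Fin 3 × (Bool × Bool)) :
    KrF N w g x * stateOf N v * (KrF N w g x)ᴴ
      = ((2:ℂ) ^ N)⁻¹ • (((w x.1 : ℂ) * v x.2) • Pi4 N (g x.1 x.2)) := by
  obtain ⟨t, a⟩ := x
  set F := flip4 N a (g t a) with hF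
  rw [KrF, stateOf, Matrix.conjTranspose_smul, Matrix.conjTranspose_mul, Pi4_herm N hN,
    flip4_herm]
  simp only [Matrix.smul_mul, Matrix.mul_smul, smul_smul]
  have key : ∀ b : Bool × Bool,
      F * Pi4 N a * (v b • Pi4 N b) * (Pi4 N a * F)
        = (if a = b then v b else 0) • Pi4 N (g t a) := by
    intro b
    rw [Matrix.mul_smul, Matrix.smul_mul]
    rw [show F * Pi4 N a * Pi4 N b * (Pi4 N a * F)
        = F * (Pi4 N a * Pi4 N b * Pi4 N a) * F by simp only [Matrix.mul_assoc]]
    rw [Pi4_mul_Pi4 N hN a b]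
    by_cases hab : a = b
    · rw [if_pos hab, if_pos hab, Pi4_mul_Pi4 N hN a a, if_pos rfl, hF, flip4_conj N h0]
    · rw [if_neg hab, if_neg hab, Matrix.zero_mul, Matrix.mul_zero, Matrix.zero_mul,
        smul_zero, zero_smul]
  have hsum : F * Pi4 N a * (∑ b : Bool × Bool, v b • Pi4 N b) * (Pi4 N a * F)
      = v a • Pi4 N (g t a) := by
    rw [Matrix.mul_sum, Matrix.sum_mul, Finset.sum_congr rfl fun b _ => key b,
      ← Finset.sum_smul, Fintype.sum_ite_eq]
  rw [hsum, smul_smul]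
  congr 1
  rw [Complex.star_def, Complex.conj_ofReal]
  have h2 : ((Real.sqrt (w t) : ℝ) : ℂ) * ((Real.sqrt (w t) : ℝ) : ℂ) = ((w t : ℝ) : ℂ) := by
    rw [← Complex.ofReal_mul, Real.mul_self_sqrt (hw t)]
  linear_combination ((2:ℂ) ^ N)⁻¹ * v a * h2

lemma chan_apply (N : ℕ) (hN : Even N) (h0 : 0 < N) (w : Fin 3 → ℝ)
    (g : Fin 3 → Bool × Bool → Bool × Bool) (hw : ∀ t, 0 ≤ w t) (v : Bool × Bool → ℂ) :
    chanMap N w g (stateOf N v)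
      = ((2:ℂ) ^ N)⁻¹ • ∑ x : Fin 3 × (Bool × Bool),
          ((w x.1 : ℂ) * v x.2) • Pi4 N (g x.1 x.2) := by
  rw [chanMap, Finset.sum_congr rfl fun x _ => KrF_action N hN h0 w g hw v x, ← Finset.smul_sum]

/-- deterministic atom maps used in the three channels -/
def gMapA1 : Bool × Bool → Bool × Bool := fun a =>
  if a = (true, false) then (true, false) else
  if a = (true, true) then (false, false) else (true, true)
def gMapA2 : Bool × Bool → Bool × Bool := fun a =>
  if a = (true, false) then (true, false) else
  if a = (true, true) then (false, true) else (true, true)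
def gMapA3 : Bool × Bool → Bool × Bool := fun a =>
  if a = (true, false) then (true, false) else (true, true)
def gId : Bool × Bool → Bool × Bool := fun a => a
def gConst3 : Bool × Bool → Bool × Bool := fun _ => (true, false)
def gConst4 : Bool × Bool → Bool × Bool := fun _ => (true, true)

lemma act_A (N : ℕ) (hN : Even N) (h0 : 0 < N) (p q : ℝ)
    (hp : 0 ≤ p) (hq : 0 ≤ q) (hr : 0 ≤ 1 - p - q) (t : ℝ) :
    chanMap N ![q, p, 1 - p - q] ![gMapA1, gMapA2, gMapA3] (omegaState N 0 0 t)
      = omegaState N p q t := by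
  have hw : ∀ i : Fin 3, 0 ≤ (![q, p, 1 - p - q]) i := by
    intro i
    fin_cases i <;> simp <;> linarith
  rw [omega_expand N hN 0 0 t, chan_apply N hN h0 _ _ hw, omega_expand N hN p q t, stateOf]
  congr 1
  rw [Fintype.sum_prod_type, Fin.sum_univ_three]
  simp only [Fintype.sum_prod_type, Fintype.sum_bool, nuW, gMapA1, gMapA2, gMapA3,
    Matrix.cons_val_zero, Matrix.cons_val_one, Matrix.head_cons, Matrix.cons_val_two,
    Matrix.tail_cons]
  norm_num
  push_cast
  module

lemma act_B (N : ℕ) (hN : Even N) (h0 : 0 < N) (l : ℝ) (hl0 : 0 ≤ l) (hl1 : l ≤ 1) (t : ℝ) :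
    chanMap N ![l, (1 - l)/2, (1 - l)/2] ![gId, gConst3, gConst4] (omegaState N 0 0 t)
      = omegaState N 0 0 (l * t) := by
  have hw : ∀ i : Fin 3, 0 ≤ (![l, (1 - l)/2, (1 - l)/2]) i := by
    intro i
    fin_cases i <;> simp <;> linarith
  rw [omega_expand N hN 0 0 t, chan_apply N hN h0 _ _ hw, omega_expand N hN 0 0 (l * t),
    stateOf]
  congr 1
  rw [Fintype.sum_prod_type, Fin.sum_univ_three]
  simp only [Fintype.sum_prod_type, Fintype.sum_bool, nuW, gId, gConst3, gConst4,
    Matrix.cons_val_zero, Matrix.cons_val_one, Matrix.head_cons, Matrix.cons_val_two,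
    Matrix.tail_cons]
  norm_num
  push_cast
  module

lemma act_C (N : ℕ) (hN : Even N) (h0 : 0 < N) (p q : ℝ) (t : ℝ) :
    chanMap N ![1, 0, 0] ![gMapA3, gId, gId] (omegaState N p q t)
      = omegaState N 0 0 t := by
  have hw : ∀ i : Fin 3, 0 ≤ (![(1:ℝ), 0, 0]) i := by
    intro i
    fin_cases i <;> norm_num
  rw [omega_expand N hN p q t, chan_apply N hN h0 _ _ hw, omega_expand N hN 0 0 t, stateOf]
  congr 1
  rw [Fintype.sum_prod_type, Fin.sum_univ_three]
  simp only [Fintype.sum_prod_type, Fintype.sum_bool, nuW, gId, gMapA3,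
    Matrix.cons_val_zero, Matrix.cons_val_one, Matrix.head_cons, Matrix.cons_val_two,
    Matrix.tail_cons]
  norm_num
  push_cast
  module

theorem stmt18 (N : ℕ) (hN : Even N) (hN2 : 2 ≤ N)
    (D : Matrix (Fin N → Fin 2) (Fin N → Fin 2) ℂ → Matrix (Fin N → Fin 2) (Fin N → Fin 2) ℂ → ℝ)
    (hD : Contractive N D) (hDconv : JointlyConvex N D)
    (p q p' q' : ℝ) (hp : p ∈ Set.Icc (0:ℝ) 1) (hq : q ∈ Set.Icc (0:ℝ) 1)
    (hp' : p' ∈ Set.Icc (0:ℝ) 1) (hq' : q' ∈ Set.Icc (0:ℝ) 1)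
    (hpq : p + q ≤ 1) (hpq' : p' + q' ≤ 1)
    (h h' : ℝ) (hh : h ∈ Set.Ico (0:ℝ) 1) (hh' : h' ∈ Set.Ico (0:ℝ) 1) (hle : h ≤ h') :
    D (omegaState N p q h) (omegaState N p q 0)
      ≤ D (omegaState N p' q' h') (omegaState N p' q' 0) := by
  have h0 : 0 < N := by omega
  -- Step A : D(ω(p,q,h), ω(p,q,0)) ≤ D(ω(0,0,h), ω(0,0,0))
  have chA : IsQuantumChannel N
      (chanMap N ![q, p, 1 - p - q] ![gMapA1, gMapA2, gMapA3]) := by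
    refine chan_channel N hN h0 _ _ (fun i => ?_) ?_
    · fin_cases i <;> simp <;> linarith [hp.1, hq.1]
    · simp [Fin.sum_univ_three]
      ring
  have sA := hD _ chA (omegaState N 0 0 h) (omegaState N 0 0 0)
  rw [act_A N hN h0 p q hp.1 hq.1 (by linarith) h,
    act_A N hN h0 p q hp.1 hq.1 (by linarith) 0] at sA
  -- Step C : D(ω(0,0,h'), ω(0,0,0)) ≤ D(ω(p',q',h'), ω(p',q',0))
  have chC : IsQuantumChannel N (chanMap N ![1, 0, 0] ![gMapA3, gId, gId]) := by
    refine chan_channel N hN h0 _ _ (fun i => ?_) ?_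
    · fin_cases i <;> norm_num
    · simp [Fin.sum_univ_three]
  have sC := hD _ chC (omegaState N p' q' h') (omegaState N p' q' 0)
  rw [act_C N hN h0 p' q' h', act_C N hN h0 p' q' 0] at sC
  -- Step B : D(ω(0,0,h), ω(0,0,0)) ≤ D(ω(0,0,h'), ω(0,0,0))
  have sB : D (omegaState N 0 0 h) (omegaState N 0 0 0)
      ≤ D (omegaState N 0 0 h') (omegaState N 0 0 0) := by
    by_cases hz : h' = 0
    · have hzz : h = 0 := le_antisymm (hz ▸ hle) hh.1
      rw [hzz, hz]
    · have hpos : 0 < h' := lt_of_le_of_ne hh'.1 (Ne.symm hz)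
      have hl0 : 0 ≤ h / h' := div_nonneg hh.1 (le_of_lt hpos)
      have hl1 : h / h' ≤ 1 := (div_le_one hpos).mpr hle
      have chB : IsQuantumChannel N
          (chanMap N ![h / h', (1 - h / h') / 2, (1 - h / h') / 2]
            ![gId, gConst3, gConst4]) := by
        refine chan_channel N hN h0 _ _ (fun i => ?_) ?_
        · fin_cases i <;> simp <;> linarith
        · simp [Fin.sum_univ_three]
          ring
      have sB' := hD _ chB (omegaState N 0 0 h') (omegaState N 0 0 0)
      rw [act_B N hN h0 (h / h') hl0 hl1 h', act_B N hN h0 (h / h') hl0 hl1 0, mul_zero,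
        div_mul_cancel₀ h (ne_of_gt hpos)] at sB'
      exact sB'
  linarith
end
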